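/- arXiv:2003.02121 — 9 statements merged into one kernel-verified Lean document; each statement's English description precedes it below -/
import Mathlib

section
/- For every integer k ≥ 8 there exist an integer n with n ≤ k + (1/2)·log₂ k + 5 and a set C ⊆ {0,1}^n with |C| ≥ 2^k such that the map s ↦ C(s) is injective on C (i.e., C is a reconstruction code of length n encoding k information bits with redundancy at most (1/2)·log₂ k + 5). -/
/-- The composition of a binary string: the pair (number of 0s, number of 1s).
Here `false` represents the bit 0 and `true` the bit 1. -/
def comp (w : List Bool) : ℕ × ℕ := (w.count false, w.count true)

/-- The multiset of compositions of all contiguous substrings of `s` of length `l`. -/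
def compLen (l : ℕ) (s : List Bool) : Multiset (ℕ × ℕ) :=
  ↑((List.range (s.length + 1 - l)).map fun i => comp ((s.drop i).take l))

/-- The composition multiset `C(s)`: compositions of all contiguous substrings of `s`. -/
def compMS (s : List Bool) : Multiset (ℕ × ℕ) :=
  ↑((List.range s.length).flatMap fun i =>
    (List.range (s.length - i)).map fun j => comp ((s.drop i).take (j + 1)))

/-- A single composition error: one element `(z,w)` of `M` is replaced by a
pair `(z',w')` with the same length `z'+w' = z+w`. -/
def OneErr (M M' : Multiset (ℕ × ℕ)) : Prop :=
  ∃ z w z' w' : ℕ, (z, w) ∈ M ∧ z + w = z' + w' ∧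
    M' = M - {(z, w)} + {(z', w')}

/-- `AtMostErr t M D`: `D` is obtained from `M` by at most `t` composition errors. -/
def AtMostErr : ℕ → Multiset (ℕ × ℕ) → Multiset (ℕ × ℕ) → Prop
  | 0, M, D => M = D
  | t + 1, M, D => M = D ∨ ∃ M', OneErr M M' ∧ AtMostErr t M' D

/-- The sub-multiset of elements (compositions) of length `l`. -/
def lenPart (l : ℕ) (M : Multiset (ℕ × ℕ)) : Multiset (ℕ × ℕ) :=
  M.filter fun p => p.1 + p.2 = l

/-- `D` is the result of at most `t` *asymmetric* composition errors in `C(s)`,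
for a string of length `n`: additionally, for each `1 ≤ i ≤ ⌊n/2⌋`, at most one
of the two sub-multisets of lengths `i` and `n+1-i` is altered. -/
def AsymErr (t n : ℕ) (s : List Bool) (D : Multiset (ℕ × ℕ)) : Prop :=
  AtMostErr t (compMS s) D ∧
  ∀ i, 1 ≤ i → i ≤ n / 2 →
    lenPart i D ≠ compLen i s → lenPart (n + 1 - i) D = compLen (n + 1 - i) s

/-- A Catalan-Bertrand string: every nonempty prefix has strictly more 0s than 1s. -/
def IsCB (w : List Bool) : Prop :=
  ∀ j, 1 ≤ j → j ≤ w.length → (w.take j).count true < (w.take j).count false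

/-- The reconstruction code `S_R(n)` for even `n`: `s_1 = 0`, `s_n = 1`, and the
subsequence of `s` indexed by the positions `i ∈ {1,…,n/2}` with `s_i ≠ s_{n+1-i}`
(in increasing order) is a Catalan-Bertrand string (indices here are 0-based). -/
def SReven (n : ℕ) : Set (List Bool) :=
  { s | s.length = n ∧ s.getD 0 false = false ∧ s.getD (n - 1) false = true ∧
    IsCB (((List.range (n / 2)).filter fun i =>
        s.getD i false != s.getD (n - 1 - i) false).map fun i => s.getD i false) }

/-- The reconstruction code `S_R(n)`: for odd `n`, obtained from `S_R(n-1)` by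
inserting an arbitrary middle bit. -/
def SR (n : ℕ) : Set (List Bool) :=
  if Even n then SReven n
  else { s | ∃ v ∈ SReven (n - 1), ∃ b : Bool,
      s = v.take ((n - 1) / 2) ++ [b] ++ v.drop ((n - 1) / 2) }

/-- The cumulative weight `w_l(s)`: total number of 1s over all length-`l`
contiguous substrings of `s`. -/
def cumW (l : ℕ) (s : List Bool) : ℕ :=
  ∑ i ∈ Finset.range (s.length + 1 - l), ((s.drop i).take l).count true

/-- `σ_i(s) = s_i + s_{n+1-i}` for `1 ≤ i ≤ ⌊n/2⌋`, and `σ_{⌈n/2⌉}(s) = s_{⌈n/2⌉}`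
for odd `n` (1-based indexing in the mathematical description). -/
def sigmaSeq (s : List Bool) (i : ℕ) : ℕ :=
  if 2 * i ≤ s.length then
    (if s.getD (i - 1) false then 1 else 0) +
      (if s.getD (s.length - i) false then 1 else 0)
  else (if s.getD (i - 1) false then 1 else 0)

/-!
Take `n = 2m` and call `s` suffix-heavy if, for every `j ≤ m`, its prefix of length `j` has
at most as many 1s as its suffix of length `j`. Such an `s` is determined by `C(s)`: deleting
a substring of length `n - j` from `s` leaves a prefix of length `i` and a suffix of length
`j - i`, so by induction on `j` the compositions of length `n - j` reveal the unordered pair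
{prefix of length `j`, suffix of length `j`}, and suffix-heaviness says which is which. The
prefix weights then determine `s`.

Folding `s` into the pairs `(s_i, s_{n+1-i})`, suffix-heaviness says that a lazy walk with
steps `-1, 0, 0, +1` stays nonnegative; there are `C(2m, m) + C(2m, m+1)` such walks, and
`C(2m, m) ≥ 4^m / (2√m)`, which gives `2^k` codewords with `2m ≤ k + ½ log₂ k + 5`.
-/

lemma List.flatMap_range_ite_singleton {α : Type*} (f : ℕ → α) {K n : ℕ} (hK : K ≤ n) :
    (List.range n).flatMap (fun i => if i < K then [f i] else []) = (List.range K).map f := by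
  obtain ⟨d, rfl⟩ := Nat.exists_eq_add_of_le hK
  rw [List.range_add, List.flatMap_append, List.flatMap_map, List.map_eq_flatMap,
    List.flatMap_congr (fun i hi => if_pos (List.mem_range.mp hi))]
  simp

lemma lenPart_compMS (s : List Bool) {l : ℕ} (hl : 1 ≤ l) :
    lenPart l (compMS s) = compLen l s := by
  have inner : ∀ i ∈ List.range s.length,
      ((List.range (s.length - i)).map fun j => comp ((s.drop i).take (j + 1))).filter
          (fun p => p.1 + p.2 = l)
        = if i < s.length + 1 - l then [comp ((s.drop i).take l)] else [] := by
    intro i hi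
    rw [List.mem_range] at hi
    rw [List.filter_map, List.filter_congr (q := fun j => j = l - 1), List.filter_eq,
      List.count_range]
    · by_cases h : i < s.length + 1 - l
      · rw [if_pos (by omega), if_pos h, List.replicate_one, List.map_singleton,
          Nat.sub_add_cancel hl]
      · rw [if_neg (by omega), if_neg h]; rfl
    · intro j hj
      rw [List.mem_range] at hj
      simp only [Function.comp_apply, comp, List.count_false_add_count_true, List.length_take,
        List.length_drop, decide_eq_decide]
      omega
  rw [lenPart, compMS, compLen, Multiset.filter_coe, List.filter_flatMap, List.flatMap_congr inner,
    List.flatMap_range_ite_singleton _ (by omega)]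

lemma compLen_eq_of_compMS_eq {s v : List Bool} (h : compMS s = compMS v) {l : ℕ} (hl : 1 ≤ l) :
    compLen l s = compLen l v := by
  rw [← lenPart_compMS s hl, ← lenPart_compMS v hl, h]

lemma compLen_eq_singleton_of_length_eq {x : List Bool} {n : ℕ} (hx : x.length = n) :
    compLen n x = {comp x} := by
  subst hx
  simp [compLen]

lemma count_true_eq_of_compMS_eq {s v : List Bool} (hlen : s.length = v.length)
    (h : compMS s = compMS v) : s.count true = v.count true := by
  rcases Nat.eq_zero_or_pos s.length with h0 | hpos
  · rw [List.length_eq_zero_iff.mp h0, List.length_eq_zero_iff.mp (show v.length = 0 by omega)]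
  have hn := compLen_eq_of_compMS_eq h hpos
  rw [compLen_eq_singleton_of_length_eq rfl, compLen_eq_singleton_of_length_eq hlen.symm,
    Multiset.singleton_inj] at hn
  exact congrArg Prod.snd hn

lemma count_true_take_add_window_add_rtake (s : List Bool) {i l r : ℕ}
    (h : i + l + r = s.length) :
    (s.take i).count true + ((s.drop i).take l).count true + (s.rtake r).count true
      = s.count true := by
  have hr : s.rtake r = (s.drop i).drop l := by
    rw [List.rtake, List.drop_drop]; congr 1; omega
  rw [hr, ← List.count_append, ← List.count_append, List.append_assoc, List.take_append_drop,
    List.take_append_drop]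

/-- Complementing the substrings of length `n - j` within `s` turns `compLen (n - j)` into the
weights of the pairs (prefix of length `i`, suffix of length `j - i`). -/
lemma prefix_add_suffix_counts_eq_of_compMS_eq {s v : List Bool} (hlen : s.length = v.length)
    (h : compMS s = compMS v) {j : ℕ} (hj : j < s.length) :
    (((List.range (j + 1)).map fun i => (s.take i).count true + (s.rtake (j - i)).count true) :
        Multiset ℕ)
      = ((List.range (j + 1)).map fun i => (v.take i).count true + (v.rtake (j - i)).count true) := by
  have hl := congrArg (Multiset.map fun p => s.count true - p.2)
    (compLen_eq_of_compMS_eq h (l := s.length - j) (by omega))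
  have hrange : s.length + 1 - (s.length - j) = j + 1 := by omega
  simp only [compLen, Multiset.map_coe, List.map_map, ← hlen, hrange] at hl
  convert hl using 2 <;> refine List.map_congr_left fun i hi => ?_ <;> rw [List.mem_range] at hi
  · have := count_true_take_add_window_add_rtake s (i := i) (l := s.length - j) (r := j - i)
      (by omega)
    simp only [Function.comp_apply, comp]
    omega
  · have := count_true_take_add_window_add_rtake v (i := i) (l := s.length - j) (r := j - i)
      (by omega)
    rw [count_true_eq_of_compMS_eq hlen h]
    simp only [Function.comp_apply, comp]
    omega

lemma Multiset.eq_and_eq_of_cons_cons_eq {a b c d : ℕ} {M : Multiset ℕ} (hab : a ≤ b)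
    (hcd : c ≤ d) (h : a ::ₘ b ::ₘ M = c ::ₘ d ::ₘ M) : a = c ∧ b = d := by
  have hpair : ({a, b} : Multiset ℕ) = {c, d} :=
    add_right_cancel (b := M) (by simpa [Multiset.insert_eq_cons] using h)
  have hsum := congrArg Multiset.sum hpair
  have ha : a ∈ ({c, d} : Multiset ℕ) := hpair ▸ by simp
  have hc : c ∈ ({a, b} : Multiset ℕ) := hpair.symm ▸ by simp
  simp only [Multiset.insert_eq_cons, Multiset.mem_cons, Multiset.mem_singleton,
    Multiset.sum_cons, Multiset.sum_singleton] at ha hc hsum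
  omega

lemma List.eq_of_count_true_take_eq {s v : List Bool} (hlen : s.length = v.length)
    (h : ∀ j ≤ s.length, (s.take j).count true = (v.take j).count true) : s = v := by
  induction s generalizing v with
  | nil => exact (List.length_eq_zero_iff.mp hlen.symm).symm
  | cons a t ih =>
    obtain _ | ⟨b, u⟩ := v
    · simp at hlen
    have hab : a = b := by
      have := h 1 (by simp)
      cases a <;> cases b <;> simp_all
    subst hab
    congr
    refine ih (by simpa using hlen) fun j hj => ?_
    simpa [List.count_cons] using h (j + 1) (by simpa using hj)

def IsSuffixHeavy (s : List Bool) : Prop :=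
  ∀ j, 2 * j ≤ s.length → (s.take j).count true ≤ (s.rtake j).count true

namespace IsSuffixHeavy

variable {s v : List Bool}

lemma count_true_take_rtake_eq_of_compMS_eq (hs : IsSuffixHeavy s) (hv : IsSuffixHeavy v)
    (hlen : s.length = v.length) (h : compMS s = compMS v) :
    ∀ j, 2 * j ≤ s.length →
      (s.take j).count true = (v.take j).count true ∧
        (s.rtake j).count true = (v.rtake j).count true := by
  intro j
  induction j using Nat.strong_induction_on with
  | _ j ih =>
  intro hj
  rcases j with _ | j
  · simp
  have hB := prefix_add_suffix_counts_eq_of_compMS_eq hlen h (j := j + 1) (by omega)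
  have hmid : ∀ i ∈ List.range j,
      (s.take (i + 1)).count true + (s.rtake (j - i)).count true
        = (v.take (i + 1)).count true + (v.rtake (j - i)).count true := by
    intro i hi
    rw [List.mem_range] at hi
    rw [(ih (i + 1) (by omega) (by omega)).1, (ih (j - i) (by omega) (by omega)).2]
  rw [List.range_succ_eq_map, List.range_succ] at hB
  simp only [List.map_cons, List.map_append, List.map_map, Function.comp_def, List.map_nil,
    Nat.succ_eq_add_one, Nat.add_sub_add_right, Nat.sub_zero, Nat.sub_self, List.take_zero,
    List.rtake_zero, List.count_nil, zero_add, add_zero, List.map_congr_left hmid,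
    ← Multiset.cons_coe, ← Multiset.coe_add, Multiset.add_cons, Multiset.coe_nil] at hB
  rw [Multiset.cons_swap, Multiset.cons_swap (List.count true (v.rtake (j + 1)))] at hB
  exact Multiset.eq_and_eq_of_cons_cons_eq (hs _ hj) (hv _ (hlen ▸ hj)) hB

theorem eq_of_compMS_eq (hs : IsSuffixHeavy s) (hv : IsSuffixHeavy v)
    (hlen : s.length = v.length) (h : compMS s = compMS v) : s = v := by
  have hw := hs.count_true_take_rtake_eq_of_compMS_eq hv hlen h
  refine List.eq_of_count_true_take_eq hlen fun j hj => ?_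
  by_cases hj2 : 2 * j ≤ s.length
  · exact (hw j hj2).1
  have hsplit := fun (x : List Bool) (hx : x.length = s.length) =>
    count_true_take_add_window_add_rtake x (i := j) (l := 0) (r := s.length - j) (by omega)
  have hs' := hsplit s rfl
  have hv' := hsplit v hlen.symm
  simp only [List.take_zero, List.count_nil, add_zero] at hs' hv'
  have := (hw (s.length - j) (by omega)).2
  have := count_true_eq_of_compMS_eq hlen h
  omega

end IsSuffixHeavy

/-- Lists of pairs `(a, b)` along which the walk that starts at height `c` and moves by `b - a`
never goes below `0`. -/
def ballotPairs : ℕ → ℤ → Finset (List (Bool × Bool))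
  | 0, c => if 0 ≤ c then {[]} else ∅
  | l + 1, c =>
    if 0 ≤ c then
      Finset.univ.biUnion fun h : Bool × Bool =>
        (ballotPairs l (c + h.2.toNat - h.1.toNat)).map ⟨List.cons h, List.cons_injective⟩
    else ∅

lemma ballotPairs_of_neg (l : ℕ) {c : ℤ} (hc : c < 0) : ballotPairs l c = ∅ := by
  cases l <;> simp [ballotPairs, not_le.mpr hc]

lemma card_ballotPairs_succ (l : ℕ) {c : ℤ} (hc : 0 ≤ c) :
    (ballotPairs (l + 1) c).card
      = (ballotPairs l (c - 1)).card + 2 * (ballotPairs l c).card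
        + (ballotPairs l (c + 1)).card := by
  rw [ballotPairs, if_pos hc, Finset.card_biUnion]
  · simp only [Finset.card_map, Fintype.sum_prod_type, Fintype.sum_bool, Bool.toNat_true,
      Bool.toNat_false, Nat.cast_one, Nat.cast_zero, add_zero, sub_zero, add_sub_cancel_right]
    ring
  · intro h _ h' _ hne
    simp only [Function.onFun, Finset.disjoint_left, Finset.mem_map, Function.Embedding.coeFn_mk]
    rintro _ ⟨q, _, rfl⟩ ⟨q', _, hq'⟩
    exact hne (List.cons_eq_cons.mp hq').1.symm

def cumChoose (N : ℕ) (x : ℤ) : ℕ := ∑ i ∈ Finset.range x.toNat, N.choose i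

lemma cumChoose_succ (N : ℕ) (x : ℤ) :
    cumChoose (N + 1) x = cumChoose N (x - 1) + cumChoose N x := by
  rcases le_or_gt x 0 with hx | hx
  · simp [cumChoose, Int.toNat_eq_zero.mpr hx, Int.toNat_eq_zero.mpr (by omega : x - 1 ≤ 0)]
  obtain ⟨n, rfl⟩ : ∃ n : ℕ, x = n + 1 := ⟨(x - 1).toNat, by omega⟩
  simp only [cumChoose, add_sub_cancel_right, Int.toNat_natCast,
    show ((n : ℤ) + 1).toNat = n + 1 by omega]
  rw [Finset.sum_range_succ', Finset.sum_range_succ' (fun i => N.choose i)]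
  simp only [Nat.choose_succ_succ, Finset.sum_add_distrib, Nat.choose_zero_right]
  ring

lemma cumChoose_add_two (N : ℕ) (x : ℤ) :
    cumChoose (N + 2) x = cumChoose N (x - 2) + 2 * cumChoose N (x - 1) + cumChoose N x := by
  rw [cumChoose_succ, cumChoose_succ, cumChoose_succ, sub_sub, one_add_one_eq_two]
  ring

/-- `∑_{i = l-c}^{l+c+1} C(2l, i)`, the reflection-principle count of `ballotPairs l c`. -/
def ballotCount (l : ℕ) (c : ℤ) : ℤ := cumChoose (2 * l) (l + c + 2) - cumChoose (2 * l) (l - c)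

lemma ballotCount_succ (l : ℕ) (c : ℤ) :
    ballotCount (l + 1) c
      = ballotCount l (c - 1) + 2 * ballotCount l c + ballotCount l (c + 1) := by
  simp only [ballotCount, show 2 * (l + 1) = 2 * l + 2 by ring, cumChoose_add_two]
  push_cast
  ring_nf

lemma ballotCount_neg_one (l : ℕ) : ballotCount l (-1) = 0 := by
  rw [ballotCount, show (l : ℤ) + -1 + 2 = l + 1 by ring, show (l : ℤ) - -1 = l + 1 by ring,
    sub_self]

lemma card_ballotPairs (l : ℕ) {c : ℤ} (hc : -1 ≤ c) :
    ((ballotPairs l c).card : ℤ) = ballotCount l c := by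
  induction l generalizing c with
  | zero =>
    rcases hc.eq_or_lt with rfl | hc
    · simp [ballotPairs_of_neg, ballotCount_neg_one]
    lift c to ℕ using (by omega)
    simp [ballotPairs, ballotCount, cumChoose, show ((c : ℤ) + 2).toNat = c + 1 + 1 by omega,
      Finset.sum_range_succ']
  | succ l ih =>
    rcases hc.eq_or_lt with rfl | hc
    · simp [ballotPairs_of_neg, ballotCount_neg_one]
    rw [card_ballotPairs_succ l (by omega), ballotCount_succ]
    push_cast
    rw [ih (by omega), ih (by omega), ih (by omega)]

lemma centralBinom_le_card_ballotPairs (m : ℕ) : m.centralBinom ≤ (ballotPairs m 0).card := by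
  have hcard := card_ballotPairs m (c := 0) (by norm_num)
  have hsplit : cumChoose (2 * m) (m + 0 + 2)
      = cumChoose (2 * m) (m - 0) + (2 * m).choose m + (2 * m).choose (m + 1) := by
    simp [cumChoose, show ((m : ℤ) + 2).toNat = m + 1 + 1 by omega, Finset.sum_range_succ]
  rw [ballotCount, hsplit] at hcard
  push_cast at hcard
  rw [Nat.centralBinom_eq_two_mul_choose]
  omega

lemma length_eq_and_count_le_of_mem_ballotPairs {l : ℕ} {c : ℤ} {p : List (Bool × Bool)}
    (hp : p ∈ ballotPairs l c) :
    p.length = l ∧ ∀ j, (((p.map Prod.fst).take j).count true : ℤ)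
      ≤ c + ((p.map Prod.snd).take j).count true := by
  induction l generalizing c p with
  | zero =>
    simp only [ballotPairs] at hp
    split_ifs at hp with hc
    · simp_all
    · simp at hp
  | succ l ih =>
    simp only [ballotPairs] at hp
    split_ifs at hp with hc
    · obtain ⟨⟨a, b⟩, -, hp⟩ := Finset.mem_biUnion.mp hp
      obtain ⟨q, hq, rfl⟩ := Finset.mem_map.mp hp
      refine ⟨by simp [(ih hq).1], fun j => ?_⟩
      cases j with
      | zero => simpa using hc
      | succ j =>
        have := (ih hq).2 j
        cases a <;> cases b <;> simp at this ⊢ <;> omega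
    · simp at hp

/-- The word `s` of length `2 * p.length` whose `i`-th pair `(s_i, s_{n+1-i})` is `p[i]`. -/
def wordOfPairs (p : List (Bool × Bool)) : List Bool :=
  p.map Prod.fst ++ (p.map Prod.snd).reverse

lemma length_wordOfPairs (p : List (Bool × Bool)) : (wordOfPairs p).length = 2 * p.length := by
  simp [wordOfPairs, two_mul]

lemma wordOfPairs_inj {p q : List (Bool × Bool)} (hlen : p.length = q.length)
    (h : wordOfPairs p = wordOfPairs q) : p = q := by
  obtain ⟨hfst, hsnd⟩ := List.append_inj h (by simp [hlen])
  exact List.zip_of_prod hfst (List.reverse_inj.mp hsnd) |>.trans (List.zip_of_prod rfl rfl).symm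

lemma isSuffixHeavy_wordOfPairs {m : ℕ} {p : List (Bool × Bool)} (hp : p ∈ ballotPairs m 0) :
    IsSuffixHeavy (wordOfPairs p) := by
  obtain ⟨hlen, hdom⟩ := length_eq_and_count_le_of_mem_ballotPairs hp
  intro j hj
  rw [length_wordOfPairs] at hj
  have htake : (wordOfPairs p).take j = (p.map Prod.fst).take j :=
    List.take_append_of_le_length (by simp; omega)
  have hrtake : (wordOfPairs p).rtake j = ((p.map Prod.snd).take j).reverse := by
    rw [List.rtake_eq_reverse_take_reverse, wordOfPairs, List.reverse_append, List.reverse_reverse,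
      List.take_append_of_le_length (by simp; omega)]
  rw [htake, hrtake, List.count_reverse]
  exact_mod_cast (zero_add _ : (0 : ℤ) + _ = _) ▸ hdom j

theorem centralBinom_le_ncard_isSuffixHeavy (m : ℕ) :
    m.centralBinom ≤ {s : List Bool | s.length = 2 * m ∧ IsSuffixHeavy s}.ncard := by
  have hlen {p} (hp : p ∈ ballotPairs m 0) := (length_eq_and_count_le_of_mem_ballotPairs hp).1
  have hinj : Set.InjOn wordOfPairs (ballotPairs m 0) := fun p hp q hq =>
    wordOfPairs_inj (by rw [hlen hp, hlen hq])
  calc m.centralBinom ≤ (ballotPairs m 0).card := centralBinom_le_card_ballotPairs m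
    _ = ((ballotPairs m 0).image wordOfPairs : Set (List Bool)).ncard := by
      rw [Set.ncard_coe_finset, Finset.card_image_of_injOn hinj]
    _ ≤ _ := by
      refine Set.ncard_le_ncard ?_ ((List.finite_length_eq Bool (2 * m)).subset fun s hs => hs.1)
      intro s hs
      obtain ⟨p, hp, rfl⟩ := Finset.mem_image.mp hs
      exact ⟨by rw [length_wordOfPairs, hlen hp], isSuffixHeavy_wordOfPairs hp⟩

lemma sixteen_pow_le_mul_centralBinom_sq {m : ℕ} (hm : 0 < m) :
    16 ^ m ≤ 4 * m * m.centralBinom ^ 2 := by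
  induction m, hm using Nat.le_induction with
  | base => decide
  | succ m hm ih =>
    have key := Nat.succ_mul_centralBinom_succ m
    refine Nat.le_of_mul_le_mul_left ?_ (by positivity : 0 < (m + 1) ^ 2)
    calc (m + 1) ^ 2 * 16 ^ (m + 1) = 16 * (m + 1) ^ 2 * 16 ^ m := by ring
      _ ≤ 16 * (m + 1) ^ 2 * (4 * m * m.centralBinom ^ 2) := by gcongr
      _ ≤ 16 * (m + 1) * (2 * m + 1) ^ 2 * m.centralBinom ^ 2 := by
        have : (m + 1) ^ 2 * (4 * m) ≤ (m + 1) * (2 * m + 1) ^ 2 := by nlinarith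
        nlinarith
      _ = (m + 1) ^ 2 * (4 * (m + 1) * (m + 1).centralBinom ^ 2) := by
        rw [show (m + 1) ^ 2 * (4 * (m + 1) * (m + 1).centralBinom ^ 2)
          = 4 * (m + 1) * ((m + 1) * (m + 1).centralBinom) ^ 2 by ring, key]
        ring

lemma two_pow_le_centralBinom (k r : ℕ) (hr : k < 4 ^ r) :
    2 ^ k ≤ ((k + 4 + r) / 2).centralBinom := by
  set m := (k + 4 + r) / 2
  have hm : 0 < m := by omega
  have h4m : 4 * m ≤ 64 * 4 ^ r := by
    have := Nat.lt_pow_self (n := r) (by norm_num : 1 < 4)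
    omega
  refine (Nat.pow_le_pow_iff_left two_ne_zero).mp
    (Nat.le_of_mul_le_mul_right ?_ (by omega : 0 < 4 * m))
  calc (2 ^ k) ^ 2 * (4 * m) ≤ 4 ^ k * (64 * 4 ^ r) := by
        rw [← pow_mul, mul_comm k, pow_mul]
        gcongr
        norm_num
    _ = 4 ^ (k + 3 + r) := by ring
    _ ≤ 4 ^ (2 * m) := Nat.pow_le_pow_right (by norm_num) (by omega)
    _ = 16 ^ m := by rw [pow_mul]; norm_num
    _ ≤ _ := by nlinarith [sixteen_pow_le_mul_centralBinom_sq hm]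

theorem reconstruction_code_exists_general (k : ℕ) :
    ∃ n : ℕ, (n : ℝ) ≤ (k : ℝ) + (1 / 2) * Real.logb 2 (k : ℝ) + 5 ∧
      ∃ C : Set (List Bool),
        (∀ s ∈ C, s.length = n) ∧
        2 ^ k ≤ C.ncard ∧
        (∀ s ∈ C, ∀ v ∈ C, compMS s = compMS v → s = v) := by
  set L := Nat.log 2 k
  set r := L / 2 + 1
  set m := (k + 4 + r) / 2
  have hk : k < 4 ^ r :=
    (Nat.lt_pow_succ_log_self one_lt_two k).trans_le <| by
      rw [show 4 = 2 ^ 2 by rfl, ← pow_mul]; exact Nat.pow_le_pow_right two_pos (by omega)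
  refine ⟨2 * m, ?_, {s | s.length = 2 * m ∧ IsSuffixHeavy s}, fun s hs => hs.1,
    (two_pow_le_centralBinom k r hk).trans (centralBinom_le_ncard_isSuffixHeavy m),
    fun s hs v hv => hs.2.eq_of_compMS_eq hv.2 (hs.1.trans hv.1.symm)⟩
  have hn : ((2 * m : ℕ) : ℝ) ≤ k + 5 + (L / 2 : ℕ) := by
    exact_mod_cast (by omega : 2 * m ≤ k + 5 + L / 2)
  have hL2 : ((L / 2 : ℕ) : ℝ) ≤ L / 2 := Nat.cast_div_le
  have hL : (L : ℝ) ≤ Real.logb 2 k := Real.natLog_le_logb k 2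
  linarith

/-- For every `k ≥ 8` there exist `n ≤ k + (1/2)·log₂ k + 5` and a
reconstruction code `C ⊆ {0,1}ⁿ` with `|C| ≥ 2^k`: the map `s ↦ C(s)` is injective on `C`. -/
theorem reconstruction_code_exists (k : ℕ) (hk : 8 ≤ k) :
    ∃ n : ℕ, (n : ℝ) ≤ (k : ℝ) + (1 / 2) * Real.logb 2 (k : ℝ) + 5 ∧
      ∃ C : Set (List Bool),
        (∀ s ∈ C, s.length = n) ∧
        2 ^ k ≤ C.ncard ∧
        (∀ s ∈ C, ∀ v ∈ C, compMS s = compMS v → s = v) :=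
  reconstruction_code_exists_general k
end

section
/- Let t ≥ 1 and let n be even with n > 2(4t+1). Then the code C(n,t) corrects t symmetric composition errors (for any two distinct s, v ∈ C(n,t) there is no multiset D that is simultaneously the result of at most t composition errors in C(s) and of at most t composition errors in C(v)), and its cardinality equals the Catalan number C_h = (1/(h+1))·binom(2h,h) with h = (n − 2(4t+1))/2. -/
/-- `P(2h)` (here for an arbitrary length `L = 2h`): binary strings of length `L`
with exactly as many 0s as 1s in which every prefix has at least as many 0s as 1s. -/
def CatalanSet (L : ℕ) : Set (List Bool) :=
  { w | w.length = L ∧ 2 * w.count true = L ∧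
    ∀ j, (w.take j).count true ≤ (w.take j).count false }

/-- The code `C(n,t)`: strings starting with `4t+1` 0s, ending with `4t+1` 1s, whose
middle part is a Catalan string of length `n − 2(4t+1)`. -/
def codeCnt (n t : ℕ) : Set (List Bool) :=
  { s | ∃ m ∈ CatalanSet (n - 2 * (4 * t + 1)),
      s = List.replicate (4 * t + 1) false ++ m ++ List.replicate (4 * t + 1) true }




lemma count_true_add_count_false (l : List Bool) : l.count true + l.count false = l.length := by
  induction l with
  | nil => rfl
  | cons b l ih => cases b <;> simp [List.count_cons] <;> omega

def oP (x : List Bool) (i : ℕ) : ℕ := (x.take i).count true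
def oS (x : List Bool) (k : ℕ) : ℕ := (x.drop (x.length - k)).count true

section codeword
variable {a h : ℕ} {m : List Bool}

lemma cw_length (hm : m ∈ CatalanSet (2 * h)) :
    (List.replicate a false ++ m ++ List.replicate a true).length = 2 * a + 2 * h := by
  have := hm.1; simp [this]; omega

lemma cw_count_true (hm : m ∈ CatalanSet (2 * h)) :
    (List.replicate a false ++ m ++ List.replicate a true).count true = a + h := by
  have h1 := hm.1
  have h2 := hm.2.1
  simp [List.count_append, List.count_replicate]
  omega

lemma cw_oP_pad {i : ℕ} (hi : i ≤ a) :
    oP (List.replicate a false ++ m ++ List.replicate a true) i = 0 := by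
  unfold oP
  rw [List.append_assoc, List.take_append_of_le_length (by simpa using hi)]
  simp [List.take_replicate, List.count_replicate, min_eq_left hi]

lemma cw_oS_pad (hm : m ∈ CatalanSet (2 * h)) {k : ℕ} (hk : k ≤ a) :
    oS (List.replicate a false ++ m ++ List.replicate a true) k = k := by
  unfold oS
  rw [cw_length hm]
  have hlen : (List.replicate a false ++ m).length = a + 2 * h := by simp [hm.1]
  have heq : 2 * a + 2 * h - k = (List.replicate a false ++ m).length + (a - k) := by
    rw [hlen]; omega
  rw [heq, List.drop_length_add_append, List.drop_replicate, List.count_replicate]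
  simp
  omega

lemma cw_gap (hm : m ∈ CatalanSet (2 * h)) {i : ℕ} (h1 : a ≤ i) (h2 : i ≤ a + 2 * h) :
    oP (List.replicate a false ++ m ++ List.replicate a true) i + a
      ≤ oS (List.replicate a false ++ m ++ List.replicate a true) i := by
  set x := List.replicate a false ++ m ++ List.replicate a true with hx
  set ℓ := i - a with hℓ
  -- oP x i = (m.take ℓ).count true
  have hmlen : m.length = 2 * h := hm.1
  have hoP : oP x i = (m.take ℓ).count true := by
    unfold oP
    rw [hx, List.append_assoc]
    have : i = (List.replicate a false).length + ℓ := by simp; omega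
    rw [this, List.take_length_add_append, List.count_append, List.count_replicate]
    have hℓle : ℓ ≤ m.length := by omega
    rw [List.take_append_of_le_length hℓle]
    simp
  have hoS : oS x i = (m.drop (2 * h - ℓ)).count true + a := by
    unfold oS
    rw [cw_length hm]
    have heq : 2 * a + 2 * h - i = (List.replicate a false).length + (2 * h - ℓ) := by
      simp; omega
    rw [hx, List.append_assoc, heq, List.drop_length_add_append]
    rw [List.drop_append_of_le_length (by omega)]
    simp [List.count_append]
  rw [hoP, hoS]
  -- Catalan inequalities
  have hpre := hm.2.2 ℓ
  have hpre' := hm.2.2 (2 * h - ℓ)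
  have hlen1 : (m.take ℓ).length = ℓ := by
    rw [List.length_take]; omega
  have hlen2 : (m.take (2 * h - ℓ)).length = 2 * h - ℓ := by
    rw [List.length_take]; omega
  have hc1 := count_true_add_count_false (m.take ℓ)
  have hc2 := count_true_add_count_false (m.take (2 * h - ℓ))
  have hsplit : (m.take (2 * h - ℓ)).count true + (m.drop (2 * h - ℓ)).count true = h := by
    have : (m.take (2 * h - ℓ)).count true + (m.drop (2 * h - ℓ)).count true = m.count true := by
      conv_rhs => rw [← List.take_append_drop (2 * h - ℓ) m]
      rw [List.count_append]
    rw [this]; have := hm.2.1; omega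
  omega
end codeword


lemma oP_oS (x : List Bool) (k : ℕ) : oP x (x.length - k) + oS x k = x.count true := by
  unfold oP oS
  conv_rhs => rw [← List.take_append_drop (x.length - k) x]
  rw [List.count_append]

lemma oP_le_total (x : List Bool) (i : ℕ) : oP x i ≤ x.count true := by
  unfold oP
  conv_rhs => rw [← List.take_append_drop i x]
  rw [List.count_append]; omega

lemma eq_of_prefix_counts {p q : List Bool} (hl : p.length = q.length)
    (hc : ∀ i, (p.take i).count true = (q.take i).count true) : p = q := by
  apply List.ext_getElem hl
  intro r h1 h2
  have e2 := hc (r + 1)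
  have e1 := hc r
  rw [List.take_succ, List.take_succ, List.count_append, List.count_append] at e2
  rw [List.getElem?_eq_getElem h1, List.getElem?_eq_getElem h2] at e2
  cases hp : p[r] <;> cases hq : q[r] <;> simp [hp, hq] at e2 ⊢ <;> omega

def AMf (x : List Bool) (j i : ℕ) : ℕ := oP x i + oS x (j - i)
def AM (j : ℕ) (x : List Bool) : Multiset ℕ := (Multiset.range (j + 1)).map (AMf x j)

lemma AM_eq_compLen (x : List Bool) {n j : ℕ} (hx : x.length = n) (hj : j ≤ n) :
    AM j x = ((compLen (n - j) x).map Prod.snd).map (fun w => x.count true - w) := by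
  unfold compLen AM
  rw [hx]
  have hr : n + 1 - (n - j) = j + 1 := by omega
  rw [hr]
  rw [Multiset.range, Multiset.map_coe, Multiset.map_coe, Multiset.map_coe]
  congr 1
  rw [List.map_map, List.map_map]
  apply List.map_congr_left
  intro i hi
  rw [List.mem_range] at hi
  have hij : i ≤ j := by omega
  -- pointwise identity
  have hw : ((x.drop i).take (n - j)).count true + oP x i = oP x (i + (n - j)) := by
    unfold oP
    rw [List.take_add, List.count_append]
    ring
  have hoS : oP x (i + (n - j)) + oS x (j - i) = x.count true := by
    have := oP_oS x (j - i)
    rw [hx] at this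
    rwa [show n - (j - i) = i + (n - j) by omega] at this
  have h1 : oP x (i + (n - j)) ≤ x.count true := oP_le_total x _
  simp only [Function.comp, comp, AMf]
  omega

-- monotonicity / Lipschitz lemmas
lemma oP_le_add (x : List Bool) {k i : ℕ} (h : k ≤ i) : oP x i ≤ oP x k + (i - k) := by
  unfold oP
  have hsplit : x.take i = x.take k ++ ((x.drop k).take (i - k)) := by
    rw [← List.take_add]; congr 1; omega
  rw [hsplit, List.count_append]
  have h2 : ((x.drop k).take (i - k)).count true ≤ i - k := by
    exact le_trans List.count_le_length (by simp)
  omega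

lemma oP_mono (x : List Bool) {k i : ℕ} (h : k ≤ i) : oP x k ≤ oP x i := by
  unfold oP
  have hsplit : x.take i = x.take k ++ ((x.drop k).take (i - k)) := by
    rw [← List.take_add]; congr 1; omega
  rw [hsplit, List.count_append]; omega

lemma oS_mono (x : List Bool) {k i : ℕ} (h : k ≤ i) : oS x k ≤ oS x i := by
  unfold oS
  have hd : x.drop (x.length - k) = (x.drop (x.length - i)).drop ((x.length - k) - (x.length - i)) := by
    rw [List.drop_drop]; congr 1; omega
  rw [hd]
  conv_rhs => rw [← List.take_append_drop ((x.length - k) - (x.length - i)) (x.drop (x.length - i))]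
  rw [List.count_append]; omega

section mid
variable {a h : ℕ} {m : List Bool}

lemma cw_oP_mid (hm : m ∈ CatalanSet (2 * h)) {i : ℕ} (h1 : a ≤ i) (h2 : i ≤ a + 2 * h) :
    oP (List.replicate a false ++ m ++ List.replicate a true) i = (m.take (i - a)).count true := by
  unfold oP
  rw [List.append_assoc]
  have hmlen : m.length = 2 * h := hm.1
  have heq : i = (List.replicate a false).length + (i - a) := by simp; omega
  rw [heq, List.take_length_add_append, List.count_append, List.count_replicate]
  rw [List.take_append_of_le_length (by omega)]
  simp
end mid

/-- The core distance lemma. -/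
lemma core_distance {t h : ℕ} (ht : 1 ≤ t) {m m' : List Bool}
    (hm : m ∈ CatalanSet (2 * h)) (hm' : m' ∈ CatalanSet (2 * h)) (hmm : m ≠ m') :
    ∃ j0, 4 * t + 2 ≤ j0 ∧ j0 ≤ (4 * t + 1) + 2 * h ∧ ∀ j, j0 ≤ j → j ≤ j0 + 2 * t →
      AM j (List.replicate (4 * t + 1) false ++ m ++ List.replicate (4 * t + 1) true) ≠
      AM j (List.replicate (4 * t + 1) false ++ m' ++ List.replicate (4 * t + 1) true) := by
  set a := 4 * t + 1 with ha
  set s := List.replicate a false ++ m ++ List.replicate a true with hs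
  set v := List.replicate a false ++ m' ++ List.replicate a true with hv
  -- existence of a differing index
  have hex : ∃ i, (oP s i ≠ oP v i ∨ oS s i ≠ oS v i) ∧ i ≤ a + 2 * h := by
    by_contra hno
    push_neg at hno
    apply hmm
    apply eq_of_prefix_counts (by rw [hm.1, hm'.1])
    intro ℓ
    rcases le_or_gt ℓ (2 * h) with hℓ | hℓ
    · have e1 := cw_oP_mid (a := a) hm (i := a + ℓ) (by omega) (by omega)
      have e2 := cw_oP_mid (a := a) hm' (i := a + ℓ) (by omega) (by omega)
      have e3 : oP s (a + ℓ) = oP v (a + ℓ) := by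
        by_contra hne
        have := hno (a + ℓ) (Or.inl hne); omega
      rw [show a + ℓ - a = ℓ by omega] at e1 e2
      rw [← e1, ← e2, e3]
    · rw [List.take_of_length_le (by rw [hm.1]; omega), List.take_of_length_le (by rw [hm'.1]; omega)]
      have := hm.2.1; have := hm'.2.1; omega
  have hex' : ∃ i, oP s i ≠ oP v i ∨ oS s i ≠ oS v i := ⟨hex.choose, hex.choose_spec.1⟩
  set j0 := Nat.find hex' with hj0def
  have hspec := Nat.find_spec hex'
  have hmin : ∀ i, i < j0 → oP s i = oP v i ∧ oS s i = oS v i := by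
    intro i hi
    have := Nat.find_min hex' hi
    push_neg at this; exact this
  have hj0ub : j0 ≤ a + 2 * h := le_trans (Nat.find_min' hex' hex.choose_spec.1) hex.choose_spec.2
  have hj0lb : a + 1 ≤ j0 := by
    by_contra hlt
    push_neg at hlt
    have h1 : oP s j0 = oP v j0 := by
      rw [cw_oP_pad (by omega), cw_oP_pad (by omega)]
    have h2 : oS s j0 = oS v j0 := by
      rw [cw_oS_pad hm (by omega), cw_oS_pad hm' (by omega)]
    tauto
  refine ⟨j0, by omega, hj0ub, ?_⟩
  intro j hjl hju hAM
  -- decomposition of the index range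
  set R : Multiset ℕ := Multiset.range (j + 1) with hR
  set Lo : Multiset ℕ := R.filter (fun i => i ≤ j - j0) with hLo
  set Rest : Multiset ℕ := R.filter (fun i => ¬ i ≤ j - j0) with hRest
  set Mid : Multiset ℕ := Rest.filter (fun i => i < j0) with hMid
  set Hi : Multiset ℕ := Rest.filter (fun i => ¬ i < j0) with hHi
  have hdecomp : ∀ x : List Bool, AM j x =
      (Lo.map (AMf x j) + Hi.map (AMf x j)) + Mid.map (AMf x j) := by
    intro x
    have h1 : Mid + Hi = Rest := Multiset.filter_add_not _ _
    have h2 : Lo + Rest = R := Multiset.filter_add_not _ _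
    calc AM j x = R.map (AMf x j) := rfl
    _ = (Lo + (Mid + Hi)).map (AMf x j) := by rw [h1, h2]
    _ = _ := by rw [Multiset.map_add, Multiset.map_add]; abel
  -- facts about membership
  have hLomem : ∀ i ∈ Lo, i ≤ j - j0 := fun i hi => (Multiset.mem_filter.mp hi).2
  have hHimem : ∀ i ∈ Hi, j0 ≤ i ∧ i ≤ j := by
    intro i hi
    have h1 := Multiset.mem_filter.mp hi
    have h2 := Multiset.mem_filter.mp h1.1
    have := Multiset.mem_range.mp h2.1
    exact ⟨by omega, by omega⟩
  have hMidmem : ∀ i ∈ Mid, j - j0 < i ∧ i < j0 := by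
    intro i hi
    have h1 := Multiset.mem_filter.mp hi
    have h2 := Multiset.mem_filter.mp h1.1
    exact ⟨by omega, h1.2⟩
  -- middle parts agree
  have hMidEq : Mid.map (AMf s j) = Mid.map (AMf v j) := by
    apply Multiset.map_congr rfl
    intro i hi
    obtain ⟨hi1, hi2⟩ := hMidmem i hi
    have e1 := (hmin i hi2).1
    have e2 := (hmin (j - i) (by omega)).2
    unfold AMf; rw [e1, e2]
  have key : Lo.map (AMf s j) + Hi.map (AMf s j) = Lo.map (AMf v j) + Hi.map (AMf v j) := by
    have h1 := hAM
    rw [hdecomp s, hdecomp v, hMidEq] at h1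
    exact add_right_cancel h1
  -- threshold
  set θ := min (oS s j0) (oS v j0) with hθ
  have hgaps : oP s j0 + a ≤ oS s j0 := cw_gap hm (by omega) (by omega)
  have hgapv : oP v j0 + a ≤ oS v j0 := cw_gap hm' (by omega) (by omega)
  have hcross1 : oP s j0 ≤ oP v j0 + 1 := by
    have h1 : oP s j0 ≤ oP s (j0 - 1) + 1 := by
      have := oP_le_add s (k := j0 - 1) (i := j0) (by omega); omega
    have h2 := (hmin (j0 - 1) (by omega)).1
    have h3 : oP v (j0 - 1) ≤ oP v j0 := oP_mono v (by omega)
    omega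
  have hcross2 : oP v j0 ≤ oP s j0 + 1 := by
    have h1 : oP v j0 ≤ oP v (j0 - 1) + 1 := by
      have := oP_le_add v (k := j0 - 1) (i := j0) (by omega); omega
    have h2 := (hmin (j0 - 1) (by omega)).1
    have h3 : oP s (j0 - 1) ≤ oP s j0 := oP_mono s (by omega)
    omega
  -- bounds on Hi elements
  have hHiBound : ∀ x : List Bool, (x = s ∨ x = v) → ∀ i ∈ Hi, AMf x j i < θ := by
    rintro x hx i hi
    obtain ⟨hi1, hi2⟩ := hHimem i hi
    have hpad : oS x (j - i) = j - i := by
      rcases hx with rfl | rfl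
      · exact cw_oS_pad hm (by omega)
      · exact cw_oS_pad hm' (by omega)
    have hlip : oP x i ≤ oP x j0 + (i - j0) := oP_le_add x hi1
    unfold AMf
    rw [hpad]
    have hb : oP x j0 ≤ min (oP s j0) (oP v j0) + 1 := by
      rcases hx with rfl | rfl <;> omega
    omega
  -- bounds on Lo elements
  have hLoBound : ∀ x : List Bool, (x = s ∨ x = v) → ∀ i ∈ Lo, θ ≤ AMf x j i := by
    rintro x hx i hi
    have hi1 := hLomem i hi
    have hmono : oS x j0 ≤ oS x (j - i) := oS_mono x (by omega)
    have : θ ≤ oS x j0 := by rcases hx with rfl | rfl <;> omega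
    unfold AMf; omega
  -- separate
  have hLoEq : Lo.map (AMf s j) = Lo.map (AMf v j) := by
    have h1 := congrArg (Multiset.filter (fun e => θ ≤ e)) key
    rw [Multiset.filter_add, Multiset.filter_add] at h1
    have f1 : Multiset.filter (fun e => θ ≤ e) (Lo.map (AMf s j)) = Lo.map (AMf s j) :=
      Multiset.filter_eq_self.mpr (by
        intro e he; obtain ⟨i, hi, rfl⟩ := Multiset.mem_map.mp he
        exact hLoBound s (Or.inl rfl) i hi)
    have f2 : Multiset.filter (fun e => θ ≤ e) (Lo.map (AMf v j)) = Lo.map (AMf v j) :=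
      Multiset.filter_eq_self.mpr (by
        intro e he; obtain ⟨i, hi, rfl⟩ := Multiset.mem_map.mp he
        exact hLoBound v (Or.inr rfl) i hi)
    have f3 : Multiset.filter (fun e => θ ≤ e) (Hi.map (AMf s j)) = 0 :=
      Multiset.filter_eq_nil.mpr (by
        intro e he; obtain ⟨i, hi, rfl⟩ := Multiset.mem_map.mp he
        exact not_le.mpr (hHiBound s (Or.inl rfl) i hi))
    have f4 : Multiset.filter (fun e => θ ≤ e) (Hi.map (AMf v j)) = 0 :=
      Multiset.filter_eq_nil.mpr (by
        intro e he; obtain ⟨i, hi, rfl⟩ := Multiset.mem_map.mp he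
        exact not_le.mpr (hHiBound v (Or.inr rfl) i hi))
    rw [f1, f2, f3, f4] at h1
    simpa using h1
  have hHiEq : Hi.map (AMf s j) = Hi.map (AMf v j) := by
    rw [hLoEq] at key
    exact add_left_cancel key
  -- derive contradiction
  have hj0inR : j0 ∈ R := Multiset.mem_range.mpr (by omega)
  have hjj0inR : j - j0 ∈ R := Multiset.mem_range.mpr (by omega)
  have hosEq : oS s j0 = oS v j0 := by
    have hmemLo : j - j0 ∈ Lo := Multiset.mem_filter.mpr ⟨hjj0inR, by simp⟩
    have hval : ∀ x : List Bool, (x = s ∨ x = v) → AMf x j (j - j0) = oS x j0 := by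
      rintro x hx
      unfold AMf
      rw [show j - (j - j0) = j0 by omega]
      have : oP x (j - j0) = 0 := by
        rcases hx with rfl | rfl <;> exact cw_oP_pad (by omega)
      omega
    have hle1 : oS v j0 ≤ oS s j0 := by
      have hmem : oS s j0 ∈ Lo.map (AMf v j) := by
        rw [← hLoEq]
        exact Multiset.mem_map.mpr ⟨j - j0, hmemLo, hval s (Or.inl rfl)⟩
      obtain ⟨i, hi, hie⟩ := Multiset.mem_map.mp hmem
      have hmono : oS v j0 ≤ oS v (j - i) := oS_mono v (by have := hLomem i hi; omega)
      have : oS v (j - i) ≤ AMf v j i := by unfold AMf; omega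
      omega
    have hle2 : oS s j0 ≤ oS v j0 := by
      have hmem : oS v j0 ∈ Lo.map (AMf s j) := by
        rw [hLoEq]
        exact Multiset.mem_map.mpr ⟨j - j0, hmemLo, hval v (Or.inr rfl)⟩
      obtain ⟨i, hi, hie⟩ := Multiset.mem_map.mp hmem
      have hmono : oS s j0 ≤ oS s (j - i) := oS_mono s (by have := hLomem i hi; omega)
      have : oS s (j - i) ≤ AMf s j i := by unfold AMf; omega
      omega
    omega
  have hopNe : oP s j0 ≠ oP v j0 := by tauto
  -- max argument on Hi
  have hmemHi : j0 ∈ Hi := by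
    refine Multiset.mem_filter.mpr ⟨Multiset.mem_filter.mpr ⟨hj0inR, by simp; omega⟩, by simp⟩
  have hvalHi : ∀ x : List Bool, (x = s ∨ x = v) → AMf x j j0 = oP x j0 + (j - j0) := by
    rintro x hx
    unfold AMf
    have : oS x (j - j0) = j - j0 := by
      rcases hx with rfl | rfl
      · exact cw_oS_pad hm (by omega)
      · exact cw_oS_pad hm' (by omega)
    omega
  have hHiub : ∀ x : List Bool, (x = s ∨ x = v) → ∀ i ∈ Hi, AMf x j i ≤ oP x j0 + (j - j0) := by
    rintro x hx i hi
    obtain ⟨hi1, hi2⟩ := hHimem i hi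
    have hpad : oS x (j - i) = j - i := by
      rcases hx with rfl | rfl
      · exact cw_oS_pad hm (by omega)
      · exact cw_oS_pad hm' (by omega)
    have hlip : oP x i ≤ oP x j0 + (i - j0) := oP_le_add x hi1
    unfold AMf; omega
  have hle1 : oP s j0 ≤ oP v j0 := by
    have hmem : oP s j0 + (j - j0) ∈ Hi.map (AMf v j) := by
      rw [← hHiEq]
      exact Multiset.mem_map.mpr ⟨j0, hmemHi, hvalHi s (Or.inl rfl)⟩
    obtain ⟨i, hi, hie⟩ := Multiset.mem_map.mp hmem
    have := hHiub v (Or.inr rfl) i hi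
    omega
  have hle2 : oP v j0 ≤ oP s j0 := by
    have hmem : oP v j0 + (j - j0) ∈ Hi.map (AMf s j) := by
      rw [hHiEq]
      exact Multiset.mem_map.mpr ⟨j0, hmemHi, hvalHi v (Or.inr rfl)⟩
    obtain ⟨i, hi, hie⟩ := Multiset.mem_map.mp hmem
    have := hHiub s (Or.inl rfl) i hi
    omega
  omega




lemma filter_flatMap' {α β : Type*} (l : List α) (f : α → List β) (p : β → Bool) :
    (l.flatMap f).filter p = l.flatMap fun a => (f a).filter p := by
  induction l with
  | nil => rfl
  | cons a l ih => simp [List.flatMap_cons, List.filter_append, ih]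

lemma filter_map' {α β : Type*} (l : List α) (f : α → β) (p : β → Bool) :
    (l.map f).filter p = (l.filter (p ∘ f)).map f := by
  induction l with
  | nil => rfl
  | cons a l ih =>
    simp only [List.map_cons, List.filter_cons]
    by_cases h : p (f a) <;> simp [h, ih, Function.comp]

lemma flatMap_congr' {α β : Type*} (l : List α) (f g : α → List β)
    (h : ∀ a ∈ l, f a = g a) : l.flatMap f = l.flatMap g := by
  induction l with
  | nil => rfl
  | cons a l ih =>
    simp only [List.flatMap_cons]
    rw [h a (by simp), ih (fun b hb => h b (by simp [hb]))]

lemma flatMap_range_if {β : Type*} (n K : ℕ) (hK : K ≤ n) (g : ℕ → β) :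
    ((List.range n).flatMap fun i => if i < K then [g i] else []) = (List.range K).map g := by
  induction n with
  | zero => have : K = 0 := by omega
            simp [this]
  | succ n ih =>
    rcases Nat.lt_or_ge K (n + 1) with h1 | h1
    · rw [List.range_succ, List.flatMap_append, ih (by omega)]
      have : ¬ n < K := by omega
      simp [this]
    · have hK2 : K = n + 1 := by omega
      subst hK2
      have : ((List.range (n+1)).flatMap fun i => if i < n + 1 then [g i] else [])
          = (List.range (n+1)).flatMap fun i => [g i] := by
        apply flatMap_congr'
        intro a ha
        rw [if_pos (List.mem_range.mp ha)]
      rw [this]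
      induction (List.range (n+1)) with
      | nil => rfl
      | cons a l ih2 => simp [List.flatMap_cons, ih2]

lemma range_filter_eq (k c : ℕ) :
    (List.range k).filter (fun j => decide (j = c)) = if c < k then [c] else [] := by
  induction k with
  | zero => simp
  | succ k ih =>
    rw [List.range_succ, List.filter_append, ih]
    by_cases h : c < k
    · have : ¬ (k = c) := by omega
      simp [h, this, if_pos (by omega : c < k + 1), Nat.le_of_lt h]
    · by_cases h2 : c < k + 1
      · have : k = c := by omega
        simp [h, h2, this]
      · have : ¬ (k = c) := by omega
        simp [h, h2, this]

lemma atMostErr_lenPart : ∀ (t : ℕ) (M D : Multiset (ℕ × ℕ)), AtMostErr t M D →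
    ∃ S : Finset ℕ, S.card ≤ t ∧ ∀ l, l ∉ S → lenPart l M = lenPart l D := by
  intro t
  induction t with
  | zero =>
    intro M D hMD
    exact ⟨∅, by simp, fun l _ => by rw [hMD]⟩
  | succ t ih =>
    intro M D hMD
    rcases hMD with rfl | ⟨M', ⟨z, w, z', w', hmem, hlen, rfl⟩, hM'D⟩
    · exact ⟨∅, by simp, fun l _ => rfl⟩
    · obtain ⟨S, hS, hSl⟩ := ih _ _ hM'D
      refine ⟨insert (z + w) S, ?_, ?_⟩
      · calc (insert (z + w) S).card ≤ S.card + 1 := Finset.card_insert_le _ _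
        _ ≤ t + 1 := by omega
      · intro l hl
        rw [Finset.mem_insert] at hl
        push_neg at hl
        rw [← hSl l hl.2]
        unfold lenPart
        rw [Multiset.filter_add, Multiset.filter_sub]
        rw [Multiset.filter_singleton, Multiset.filter_singleton]
        rw [if_neg (by simp; omega), if_neg (by simp; omega)]
        simp




lemma count_U_add_count_D (l : List DyckStep) :
    l.count DyckStep.U + l.count DyckStep.D = l.length := by
  induction l with
  | nil => rfl
  | cons b l ih => cases b <;> simp [List.count_cons] <;> omega

open DyckStep in
def boolToStep (b : Bool) : DyckStep := if b then D else U

open DyckStep in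
def stepToBool (st : DyckStep) : Bool := match st with | U => false | D => true

open DyckStep in
noncomputable def catalanEquiv (h : ℕ) :
    (CatalanSet (2 * h)) ≃ { p : DyckWord // p.semilength = h } where
  toFun w := ⟨⟨w.1.map boolToStep, by
      have hw := w.2
      have h1 : (w.1.map boolToStep).count U = w.1.count false := by
        have : U = boolToStep false := rfl
        rw [this, List.count_map_of_injective _ boolToStep
          (by intro a b; cases a <;> cases b <;> simp [boolToStep])]
      have h2 : (w.1.map boolToStep).count D = w.1.count true := by
        have : D = boolToStep true := rfl
        rw [this, List.count_map_of_injective _ boolToStep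
          (by intro a b; cases a <;> cases b <;> simp [boolToStep])]
      rw [h1, h2]
      have := count_true_add_count_false w.1
      have hL := hw.1
      have hC := hw.2.1
      omega, by
      intro i
      have hw := w.2
      rw [← List.map_take]
      have h1 : ((w.1.take i).map boolToStep).count U = (w.1.take i).count false := by
        have : U = boolToStep false := rfl
        rw [this, List.count_map_of_injective _ boolToStep
          (by intro a b; cases a <;> cases b <;> simp [boolToStep])]
      have h2 : ((w.1.take i).map boolToStep).count D = (w.1.take i).count true := by
        have : D = boolToStep true := rfl
        rw [this, List.count_map_of_injective _ boolToStep
          (by intro a b; cases a <;> cases b <;> simp [boolToStep])]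
      rw [h1, h2]
      exact hw.2.2 i⟩, by
      have hw := w.2
      show (w.1.map boolToStep).count U = h
      have h1 : (w.1.map boolToStep).count U = w.1.count false := by
        have : U = boolToStep false := rfl
        rw [this, List.count_map_of_injective _ boolToStep
          (by intro a b; cases a <;> cases b <;> simp [boolToStep])]
      rw [h1]
      have := count_true_add_count_false w.1
      have hL := hw.1
      have hC := hw.2.1
      omega⟩
  invFun p := ⟨p.1.toList.map stepToBool, by
      have hsl : p.1.toList.count U = h := p.2
      have hUD := p.1.count_U_eq_count_D
      have hlen := count_U_add_count_D p.1.toList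
      have h1 : (p.1.toList.map stepToBool).count true = p.1.toList.count D := by
        have : true = stepToBool D := rfl
        rw [this, List.count_map_of_injective _ stepToBool
          (by intro a b; cases a <;> cases b <;> simp [stepToBool])]
      refine ⟨by simp; omega, by rw [h1]; omega, ?_⟩
      intro j
      rw [← List.map_take]
      have h2 : ((p.1.toList.take j).map stepToBool).count true = (p.1.toList.take j).count D := by
        have : true = stepToBool D := rfl
        rw [this, List.count_map_of_injective _ stepToBool
          (by intro a b; cases a <;> cases b <;> simp [stepToBool])]
      have h3 : ((p.1.toList.take j).map stepToBool).count false = (p.1.toList.take j).count U := by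
        have : false = stepToBool U := rfl
        rw [this, List.count_map_of_injective _ stepToBool
          (by intro a b; cases a <;> cases b <;> simp [stepToBool])]
      rw [h2, h3]
      exact p.1.count_D_le_count_U j⟩
  left_inv w := by
    apply Subtype.ext
    show (w.1.map boolToStep).map stepToBool = w.1
    rw [List.map_map]
    have : stepToBool ∘ boolToStep = id := by
      funext b; cases b <;> rfl
    rw [this, List.map_id]
  right_inv p := by
    apply Subtype.ext
    apply DyckWord.ext
    show (p.1.toList.map stepToBool).map boolToStep = p.1.toList
    rw [List.map_map]
    have : boolToStep ∘ stepToBool = id := by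
      funext st; cases st <;> rfl
    rw [this, List.map_id]

lemma ncard_catalanSet (h : ℕ) : (CatalanSet (2 * h)).ncard = catalan h := by
  rw [← Nat.card_coe_set_eq, Nat.card_congr (catalanEquiv h),
    Nat.card_eq_fintype_card, DyckWord.card_dyckWord_semilength_eq_catalan]

/-- For `t ≥ 1` and even `n > 2(4t+1)`, the code `C(n,t)` corrects `t`
symmetric composition errors, and its cardinality equals the Catalan number `C_h`
with `h = (n − 2(4t+1))/2`. -/
theorem codeCnt_corrects_and_card (t n : ℕ) (ht : 1 ≤ t) (hn : Even n)
    (hbig : 2 * (4 * t + 1) < n) :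
    (∀ s ∈ codeCnt n t, ∀ v ∈ codeCnt n t, s ≠ v →
      ¬ ∃ D : Multiset (ℕ × ℕ),
        AtMostErr t (compMS s) D ∧ AtMostErr t (compMS v) D) ∧
    (codeCnt n t).ncard = catalan ((n - 2 * (4 * t + 1)) / 2) := by
  obtain ⟨hcat, hcard⟩ : (∃ h : ℕ, n - 2 * (4 * t + 1) = 2 * h) ∧ True := by
    exact ⟨by obtain ⟨k, hk⟩ := hn; exact ⟨k - (4 * t + 1), by omega⟩, trivial⟩
  obtain ⟨h, h2h⟩ := hcat
  have hh1 : 1 ≤ h := by omega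
  have hn2 : n = 2 * (4 * t + 1) + 2 * h := by omega
  constructor
  · rintro s hs v hv hne ⟨D, hDs, hDv⟩
    obtain ⟨m, hm, rfl⟩ := hs
    obtain ⟨m', hm', rfl⟩ := hv
    rw [h2h] at hm hm'
    set s := List.replicate (4 * t + 1) false ++ m ++ List.replicate (4 * t + 1) true with hsdef
    set v := List.replicate (4 * t + 1) false ++ m' ++ List.replicate (4 * t + 1) true with hvdef
    have hmm : m ≠ m' := by rintro rfl; exact hne rfl
    obtain ⟨j0, hj1, hj2, hcore⟩ := core_distance ht hm hm' hmm
    have hslen : s.length = n := by rw [hsdef, cw_length hm]; omega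
    have hvlen : v.length = n := by rw [hvdef, cw_length hm']; omega
    have hscount : s.count true = 4 * t + 1 + h := cw_count_true hm
    have hvcount : v.count true = 4 * t + 1 + h := cw_count_true hm'
    have hdiff : ∀ j, j0 ≤ j → j ≤ j0 + 2 * t → compLen (n - j) s ≠ compLen (n - j) v := by
      intro j hja hjb hEq
      apply hcore j hja hjb
      rw [AM_eq_compLen s hslen (by omega), AM_eq_compLen v hvlen (by omega), hEq,
        hscount, hvcount]
    obtain ⟨Ss, hSs, hSsl⟩ := atMostErr_lenPart t _ D hDs
    obtain ⟨Sv, hSv, hSvl⟩ := atMostErr_lenPart t _ D hDv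
    have hsub : (Finset.Icc j0 (j0 + 2 * t)).image (fun j => n - j) ⊆ Ss ∪ Sv := by
      intro l hl
      obtain ⟨j, hjmem, rfl⟩ := Finset.mem_image.mp hl
      rw [Finset.mem_Icc] at hjmem
      by_contra hnot
      rw [Finset.mem_union] at hnot
      push_neg at hnot
      have e1 := hSsl _ hnot.1
      have e2 := hSvl _ hnot.2
      rw [lenPart_compMS s (by omega)] at e1
      rw [lenPart_compMS v (by omega)] at e2
      exact hdiff j hjmem.1 hjmem.2 (e1.trans e2.symm)
    have hcard1 : ((Finset.Icc j0 (j0 + 2 * t)).image (fun j => n - j)).card = 2 * t + 1 := by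
      rw [Finset.card_image_of_injOn, Nat.card_Icc]
      · omega
      · intro x hx y hy hxy
        simp only [Finset.coe_Icc, Set.mem_Icc] at hx hy
        simp only at hxy
        omega
    have hcard2 : (Ss ∪ Sv).card ≤ 2 * t := le_trans (Finset.card_union_le _ _) (by omega)
    have := Finset.card_le_card hsub
    omega
  · have himg : codeCnt n t =
        (fun m => List.replicate (4 * t + 1) false ++ m ++ List.replicate (4 * t + 1) true) ''
          (CatalanSet (n - 2 * (4 * t + 1))) := by
      ext x
      constructor
      · rintro ⟨m, hm, rfl⟩; exact ⟨m, hm, rfl⟩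
      · rintro ⟨m, hm, rfl⟩; exact ⟨m, hm, rfl⟩
    have hinj : Function.Injective
        (fun m : List Bool => List.replicate (4 * t + 1) false ++ m ++ List.replicate (4 * t + 1) true) := by
      intro m m' e
      simp only at e
      have e1 := List.append_cancel_right e
      exact List.append_cancel_left e1
    rw [himg, Set.ncard_image_of_injective _ hinj, h2h, ncard_catalanSet]
    congr 1
    omega
end

section
/- Let t ≥ 1 and let n be even with n > 2(4t+1). For any two distinct strings s, v ∈ C(n,t), the multiset symmetric difference of their composition multisets satisfies |C(s) △ C(v)| ≥ 4t+1, where the symmetric difference of multisets is counted with multiplicity. -/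
/-! ### Auxiliary machinery for the proof -/

/-- prefix ones count -/
def cnt (s : List Bool) (x : ℕ) : ℕ := (s.take x).count true

/-- window ones count -/
def wgt (s : List Bool) (j l : ℕ) : ℕ := (((s.drop j).take l)).count true

/-- reverse complement -/
def rc (s : List Bool) : List Bool := (s.map (fun b => !b)).reverse

lemma count_false_add_count_true (w : List Bool) : w.count false + w.count true = w.length := by
  induction w with
  | nil => rfl
  | cons b tl ih => cases b <;> simp [List.count_cons] <;> omega

lemma count_true_map_not (w : List Bool) : (w.map (fun b => !b)).count true = w.count false := by
  induction w with
  | nil => rfl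
  | cons b tl ih => cases b <;> simp [List.count_cons, ih]

lemma cnt_add (s : List Bool) (j l : ℕ) : cnt s (j + l) = cnt s j + wgt s j l := by
  unfold cnt wgt
  rw [List.take_add, List.count_append]

lemma wgt_le (s : List Bool) (j l : ℕ) : wgt s j l ≤ l := by
  calc wgt s j l ≤ ((s.drop j).take l).length := List.count_le_length
  _ ≤ l := by rw [List.length_take]; omega

lemma cnt_mono (s : List Bool) {x y : ℕ} (h : x ≤ y) : cnt s x ≤ cnt s y := by
  obtain ⟨k, rfl⟩ := Nat.exists_eq_add_of_le h
  rw [cnt_add]; omega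

lemma cnt_lip (s : List Bool) {x y : ℕ} (h : x ≤ y) : cnt s y + x ≤ cnt s x + y := by
  obtain ⟨k, rfl⟩ := Nat.exists_eq_add_of_le h
  rw [cnt_add]
  have := wgt_le s x k
  omega

lemma cnt_of_length_le (s : List Bool) {x : ℕ} (h : s.length ≤ x) : cnt s x = cnt s s.length := by
  unfold cnt
  rw [List.take_of_length_le h, List.take_length]

lemma win_length (s : List Bool) {j l : ℕ} (h : j + l ≤ s.length) :
    ((s.drop j).take l).length = l := by
  rw [List.length_take, List.length_drop]; omega

lemma comp_window (s : List Bool) {j l : ℕ} (h : j + l ≤ s.length) :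
    comp ((s.drop j).take l) = (l - wgt s j l, wgt s j l) := by
  unfold comp
  have h1 := count_false_add_count_true ((s.drop j).take l)
  rw [win_length s h] at h1
  have : ((s.drop j).take l).count false = l - wgt s j l := by unfold wgt; omega
  rw [this]; rfl

lemma filter_card_eq_countP (N : ℕ) (p : ℕ → Prop) [DecidablePred p] :
    ((Finset.range N).filter p).card = (List.range N).countP (fun i => decide (p i)) := by
  rw [Finset.card_def, Finset.filter_val, Finset.range_val, ← Multiset.coe_range,
    Multiset.filter_coe, Multiset.coe_card, List.countP_eq_length_filter]

lemma list_sum_map_range (f : ℕ → ℕ) (N : ℕ) :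
    ((List.range N).map f).sum = ∑ i ∈ Finset.range N, f i := by
  rw [Finset.sum, Finset.range_val, ← Multiset.coe_range, Multiset.map_coe, Multiset.sum_coe]

lemma mcount_coe_map {α : Type*} [DecidableEq α] (f : ℕ → α) (N : ℕ) (x : α) :
    Multiset.count x ↑((List.range N).map f)
      = ((Finset.range N).filter (fun i => f i = x)).card := by
  rw [Multiset.count_eq_card_filter_eq, Multiset.filter_coe, Multiset.coe_card,
    ← List.countP_eq_length_filter, List.countP_map, filter_card_eq_countP]
  congr 1; funext i; simp [eq_comm, Function.comp]

lemma count_compLen (s : List Bool) (l : ℕ) (x : ℕ × ℕ) :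
    Multiset.count x (compLen l s) =
      ((Finset.range (s.length + 1 - l)).filter
        (fun i => comp ((s.drop i).take l) = x)).card := by
  rw [compLen, mcount_coe_map]

lemma card_compLen (s : List Bool) (l : ℕ) :
    Multiset.card (compLen l s) = s.length + 1 - l := by
  rw [compLen, Multiset.coe_card, List.length_map, List.length_range]

lemma mem_compLen_sum (s : List Bool) {l : ℕ} (hl : l ≤ s.length) {y : ℕ × ℕ}
    (hy : y ∈ compLen l s) : y.1 + y.2 = l := by
  rw [compLen, Multiset.mem_coe, List.mem_map] at hy
  obtain ⟨i, hi, rfl⟩ := hy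
  rw [List.mem_range] at hi
  rw [comp_window s (by omega)]
  have := wgt_le s i l
  simp; omega

lemma sym_exists (s v : List Bool) (hlen : s.length = v.length) (l : ℕ)
    (hl : l ≤ s.length) (x : ℕ × ℕ)
    (hx : Multiset.count x (compLen l s) < Multiset.count x (compLen l v)) :
    ∃ y : ℕ × ℕ, y.1 + y.2 = l ∧
      Multiset.count y (compLen l v) < Multiset.count y (compLen l s) := by
  by_contra hcon
  push_neg at hcon
  have hle : compLen l s ≤ compLen l v := by
    rw [Multiset.le_iff_count]
    intro y
    by_cases hy : y ∈ compLen l s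
    · exact hcon y (mem_compLen_sum s hl hy)
    · rw [Multiset.count_eq_zero_of_notMem hy]; omega
  have := Multiset.eq_of_le_of_card_le hle (by rw [card_compLen, card_compLen, hlen])
  rw [this] at hx; omega

lemma comp_sum (w : List Bool) : (comp w).1 + (comp w).2 = w.length :=
  count_false_add_count_true w

lemma count_compMS (s : List Bool) (x : ℕ × ℕ) (hx : 1 ≤ x.1 + x.2) :
    Multiset.count x (compMS s) = Multiset.count x (compLen (x.1 + x.2) s) := by
  have key : ∀ i j, j < s.length - i → (comp ((s.drop i).take (j+1)) = x ↔
      (j = (x.1 + x.2) - 1 ∧ i + (x.1 + x.2) ≤ s.length ∧ comp ((s.drop i).take (x.1+x.2)) = x)) := by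
    intro i j hj
    constructor
    · intro hcomp
      have hwl : i + (j+1) ≤ s.length := by omega
      have hlen : x.1 + x.2 = j + 1 := by
        rw [← hcomp, comp_sum, win_length s hwl]
      refine ⟨by omega, by omega, ?_⟩
      rw [hlen]; exact hcomp
    · rintro ⟨rfl, hle, hcomp⟩
      have h1 : (x.1 + x.2) - 1 + 1 = x.1 + x.2 := by omega
      rw [h1]; exact hcomp
  rw [compMS, Multiset.count_eq_card_filter_eq, Multiset.filter_coe, Multiset.coe_card,
    ← List.countP_eq_length_filter, List.flatMap_def, List.countP_flatten, List.map_map,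
    list_sum_map_range]
  have inner : ∀ i, (List.countP (fun b => decide (x = b)) ∘
        fun i => (List.range (s.length - i)).map fun j => comp ((s.drop i).take (j+1))) i
      = if i + (x.1+x.2) ≤ s.length ∧ comp ((s.drop i).take (x.1+x.2)) = x then 1 else 0 := by
    intro i
    have : (List.countP (fun b => decide (x = b)) ∘
        fun i => (List.range (s.length - i)).map fun j => comp ((s.drop i).take (j+1))) i
        = ((Finset.range (s.length - i)).filter
            (fun j => comp ((s.drop i).take (j+1)) = x)).card := by
      simp only [Function.comp, List.countP_map, filter_card_eq_countP]
      congr 1; funext j; simp [eq_comm, Function.comp]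
    rw [this]
    by_cases hc : i + (x.1+x.2) ≤ s.length ∧ comp ((s.drop i).take (x.1+x.2)) = x
    · rw [if_pos hc]
      have hfil : (Finset.range (s.length - i)).filter
          (fun j => comp ((s.drop i).take (j+1)) = x) = {(x.1+x.2) - 1} := by
        ext j
        simp only [Finset.mem_filter, Finset.mem_range, Finset.mem_singleton]
        constructor
        · rintro ⟨hj, hcomp⟩
          exact ((key i j hj).1 hcomp).1
        · rintro rfl
          have hj : (x.1+x.2) - 1 < s.length - i := by omega
          exact ⟨hj, (key i _ hj).2 ⟨rfl, hc.1, hc.2⟩⟩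
      rw [hfil, Finset.card_singleton]
    · rw [if_neg hc]
      rw [Finset.card_eq_zero, Finset.filter_eq_empty_iff]
      intro j hj
      rw [Finset.mem_range] at hj
      intro hcomp
      exact hc ((key i j hj).1 hcomp).2
  rw [Finset.sum_congr rfl (fun i _ => inner i), count_compLen, ← Finset.card_filter]
  congr 1
  ext i
  simp only [Finset.mem_filter, Finset.mem_range]
  constructor
  · rintro ⟨hi, hle, hcomp⟩
    exact ⟨by omega, hcomp⟩
  · rintro ⟨hi, hcomp⟩
    exact ⟨by omega, by omega, hcomp⟩

/-- The walk facts satisfied by codewords. -/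
structure Walk (s : List Bool) (n a : ℕ) : Prop where
  len : s.length = n
  w2 : ∀ x, x ≤ a → cnt s x = 0
  w3 : ∀ x, n - a ≤ x → x ≤ n → 2 * cnt s x + 2 * (n - x) = n
  w4 : ∀ x, a ≤ x → x ≤ n - a → 2 * cnt s x + a ≤ x

lemma codeCnt_walk {n t : ℕ} {s : List Bool} (hs : s ∈ codeCnt n t)
    (hbig : 2 * (4 * t + 1) < n) : Walk s n (4 * t + 1) := by
  obtain ⟨m, ⟨hmlen, hmcnt, hmcat⟩, rfl⟩ := hs
  set a := 4 * t + 1 with ha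
  set L := n - 2 * a with hL
  have hLlen : m.length = L := hmlen
  have hlen : (List.replicate a false ++ m ++ List.replicate a true).length = n := by
    simp [List.length_append, hLlen]; omega
  have c2 : ∀ x, a ≤ x → x ≤ a + L →
      cnt (List.replicate a false ++ m ++ List.replicate a true) x
        = (m.take (x - a)).count true := by
    intro x hx1 hx2
    unfold cnt
    rw [List.append_assoc, List.take_append, List.length_replicate,
      List.count_append, List.take_append, List.count_append]
    have h1 : (List.replicate a false).take x = List.replicate (min x a) false :=
      List.take_replicate
    rw [h1, List.count_replicate]
    have h2 : (x - a) - m.length = 0 := by omega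
    rw [hLlen] at h2 ⊢
    rw [h2, List.take_zero]
    simp
  have c1 : ∀ x, x ≤ a → cnt (List.replicate a false ++ m ++ List.replicate a true) x = 0 := by
    intro x hx
    have := cnt_mono (List.replicate a false ++ m ++ List.replicate a true) (show x ≤ a by omega)
    have ha0 : cnt (List.replicate a false ++ m ++ List.replicate a true) a = 0 := by
      rw [c2 a le_rfl (by omega), Nat.sub_self, List.take_zero, List.count_nil]
    omega
  have c3 : ∀ x, a + L ≤ x → x ≤ n →
      cnt (List.replicate a false ++ m ++ List.replicate a true) x
        = m.count true + (x - a - L) := by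
    intro x hx1 hx2
    unfold cnt
    rw [List.append_assoc, List.take_append, List.length_replicate,
      List.count_append, List.take_append, List.count_append]
    have h1 : (List.replicate a false).take x = List.replicate (min x a) false :=
      List.take_replicate
    rw [h1, List.count_replicate]
    have h2 : m.take (x - a) = m := List.take_of_length_le (by omega)
    rw [h2]
    have h3 : (List.replicate a true).take (x - a - m.length)
        = List.replicate (min (x - a - m.length) a) true := List.take_replicate
    rw [h3, List.count_replicate, hLlen]
    simp
    omega
  refine ⟨hlen, ?_, ?_, ?_⟩
  · exact c1
  · intro x hx1 hx2
    rw [c3 x (by omega) hx2]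
    omega
  · intro x hx1 hx2
    rw [c2 x hx1 (by omega)]
    have := hmcat (x - a)
    have hsum := count_false_add_count_true (m.take (x - a))
    have hlt : (m.take (x - a)).length = x - a := by
      rw [List.length_take]; omega
    omega

lemma length_rc (s : List Bool) : (rc s).length = s.length := by
  simp [rc]

lemma cnt_rc (s : List Bool) {x : ℕ} (hx : x ≤ s.length) :
    cnt (rc s) x + cnt s s.length = x + cnt s (s.length - x) := by
  have h1 : cnt (rc s) x = (s.drop (s.length - x)).count false := by
    unfold cnt rc
    rw [List.take_reverse, List.count_reverse, List.length_map, ← List.map_drop,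
      count_true_map_not]
  have h2 : (s.drop (s.length - x)).count false + (s.drop (s.length - x)).count true
      = x := by
    have := count_false_add_count_true (s.drop (s.length - x))
    rw [List.length_drop] at this
    omega
  have h3 : cnt s s.length = cnt s (s.length - x) + (s.drop (s.length - x)).count true := by
    have := cnt_add s (s.length - x) x
    have hx2 : s.length - x + x = s.length := by omega
    rw [hx2] at this
    unfold wgt at this
    rw [List.take_of_length_le (by rw [List.length_drop]; omega)] at this
    exact this
  omega

lemma walk_rc {s : List Bool} {n a : ℕ} (W : Walk s n a) (han : 2 * a ≤ n) :
    Walk (rc s) n a := by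
  have hlen := W.len
  have hrc : ∀ x, x ≤ n → cnt (rc s) x + cnt s n = x + cnt s (n - x) := by
    intro x hx
    have := cnt_rc s (x := x) (by omega)
    rwa [hlen] at this
  have htot : 2 * cnt s n = n := by
    have := W.w3 n (by omega) le_rfl
    simpa using this
  refine ⟨by rw [length_rc, hlen], ?_, ?_, ?_⟩
  · intro x hx
    have h1 := hrc x (by omega)
    have h2 := W.w3 (n - x) (by omega) (by omega)
    have h3 : n - (n - x) = x := by omega
    rw [h3] at h2
    omega
  · intro x hx1 hx2
    have h1 := hrc x hx2
    have h2 := W.w2 (n - x) (by omega)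
    omega
  · intro x hx1 hx2
    have h1 := hrc x (by omega)
    have h2 := W.w4 (n - x) (by omega) (by omega)
    omega

lemma wgt_rc (s : List Bool) {j l : ℕ} (h : j + l ≤ s.length) :
    wgt (rc s) j l + wgt s (s.length - l - j) l = l := by
  have h1 := cnt_add (rc s) j l
  have h2 := cnt_rc s (x := j + l) h
  have h3 := cnt_rc s (x := j) (by omega)
  have h4 := cnt_add s (s.length - l - j) l
  have h5 : s.length - l - j + l = s.length - j := by omega
  rw [h5] at h4
  have h6 : s.length - (j + l) = s.length - l - j := by omega
  rw [h6] at h2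
  have h7 := wgt_le (rc s) j l
  have h8 := wgt_le s (s.length - l - j) l
  have h9 := cnt_mono s (show s.length - l - j ≤ s.length - j by omega)
  omega

lemma count_compLen_rc (s : List Bool) (l z w : ℕ) (hzw : z + w = l) (hl : l ≤ s.length) :
    Multiset.count (z, w) (compLen l (rc s)) = Multiset.count (w, z) (compLen l s) := by
  rw [count_compLen, count_compLen, length_rc]
  apply Finset.card_bij' (fun i _ => s.length - l - i) (fun i _ => s.length - l - i)
  · intro i hi
    simp only [Finset.mem_filter, Finset.mem_range] at hi ⊢
    obtain ⟨hir, hip⟩ := hi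
    have hil : i + l ≤ s.length := by omega
    have hml : (s.length - l - i) + l ≤ s.length := by omega
    rw [comp_window (rc s) (by rw [length_rc]; omega)] at hip
    rw [comp_window s hml]
    have hw := wgt_rc s hil
    have h1 : wgt (rc s) i l = w := by
      have := congrArg Prod.snd hip
      simpa using this
    have h2 : l - wgt (rc s) i l = z := by
      have := congrArg Prod.fst hip
      simpa using this
    have h3 : wgt s (s.length - l - i) l = z := by omega
    rw [h3]
    have : l - z = w := by omega
    rw [this]
    exact ⟨by omega, rfl⟩
  · intro i hi
    simp only [Finset.mem_filter, Finset.mem_range] at hi ⊢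
    obtain ⟨hir, hip⟩ := hi
    have hil : i + l ≤ s.length := by omega
    have hml : (s.length - l - i) + l ≤ s.length := by omega
    rw [comp_window s hil] at hip
    rw [comp_window (rc s) (by rw [length_rc]; omega)]
    have hw := wgt_rc s hml
    have h1 : wgt s i l = z := by
      have := congrArg Prod.snd hip
      simpa using this
    have h2 : l - wgt s i l = w := by
      have := congrArg Prod.fst hip
      simpa using this
    have h5 : s.length - l - (s.length - l - i) = i := by omega
    rw [h5] at hw
    have h3 : wgt (rc s) (s.length - l - i) l = w := by omega
    rw [h3]
    have : l - w = z := by omega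
    rw [this]
    exact ⟨by omega, rfl⟩
  · intro i hi
    simp only [Finset.mem_filter, Finset.mem_range] at hi
    omega
  · intro i hi
    simp only [Finset.mem_filter, Finset.mem_range] at hi
    omega

lemma core (n t : ℕ) (ht : 1 ≤ t) (s v : List Bool)
    (Ws : Walk s n (4*t+1)) (Wv : Walk v n (4*t+1))
    (d e : ℕ)
    (hd1 : ∀ x, x ≤ d → cnt v x = cnt s x)
    (hd2 : cnt v (d+1) = cnt s (d+1) + 1)
    (he : ∀ x, e < x → cnt v x = cnt s x)
    (hda : 4*t+1 ≤ d)
    (hde : d ≤ e)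
    (hea : e + (4*t+1) + 2 ≤ n)
    (hsum : d + e + 1 ≤ n)
    (k : ℕ) (hk : k ≤ 2*t) :
    ∃ z w l : ℕ, z + w = l ∧ l + (d + k + 1) = n ∧ d + k + 1 < n ∧
      Multiset.count (z,w) (compLen l s) < Multiset.count (z,w) (compLen l v) := by
  set a := 4*t+1 with ha
  have hdk : d + k + 1 < n := by omega
  set l := n - (d + k + 1) with hldef
  have hl : l + (d + k + 1) = n := by omega
  set ω := wgt v (d+1) l with hω
  have hωl := wgt_le v (d+1) l
  have hc3 : cnt v (d+1) + ω = cnt v (n-k) := by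
    have h := cnt_add v (d+1) l
    rw [show d+1+l = n-k by omega] at h
    omega
  have hnk := Wv.w3 (n-k) (by omega) (by omega)
  have hE : 2*ω + 2*cnt s (d+1) + 2*k + 2 = n := by omega
  have hw4d := Ws.w4 (d+1) (by omega) (by omega)
  have hPiff : ∀ (A : List Bool), A.length = n → ∀ i, i ≤ d+k+1 →
      ((comp ((A.drop i).take l) = ((l - ω, ω) : ℕ × ℕ)) ↔ wgt A i l = ω) := by
    intro A hA i hi
    rw [comp_window A (by omega)]
    constructor
    · intro h
      have := congrArg Prod.snd h
      simpa using this
    · intro h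
      rw [h]
  have hrangeS : s.length + 1 - l = d + k + 2 := by rw [Ws.len]; omega
  have hrangeV : v.length + 1 - l = d + k + 2 := by rw [Wv.len]; omega
  refine ⟨l - ω, ω, l, by omega, hl, hdk, ?_⟩
  rw [count_compLen, count_compLen, hrangeS, hrangeV]
  have hfs : (Finset.range (d+k+2)).filter (fun i => comp ((s.drop i).take l) = (l - ω, ω))
      = (Finset.range (d+k+2)).filter (fun i => wgt s i l = ω) := by
    apply Finset.filter_congr
    intro i hi
    rw [Finset.mem_range] at hi
    simpa using hPiff s Ws.len i (by omega)
  have hfv : (Finset.range (d+k+2)).filter (fun i => comp ((v.drop i).take l) = (l - ω, ω))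
      = (Finset.range (d+k+2)).filter (fun i => wgt v i l = ω) := by
    apply Finset.filter_congr
    intro i hi
    rw [Finset.mem_range] at hi
    simpa using hPiff v Wv.len i (by omega)
  rw [hfs, hfv]
  have hsplit : Finset.range (d+k+2) = Finset.range (d+1) ∪ Finset.Ico (d+1) (d+k+2) := by
    simp only [Finset.range_eq_Ico]
    exact (Finset.Ico_union_Ico_eq_Ico (a := 0) (b := d+1) (c := d+k+2) (by omega) (by omega)).symm
  have hdisj : Disjoint (Finset.range (d+1)) (Finset.Ico (d+1) (d+k+2)) := by
    rw [Finset.range_eq_Ico]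
    exact Finset.Ico_disjoint_Ico_consecutive 0 (d+1) (d+k+2)
  have hpart1 : (Finset.range (d+1)).filter (fun i => wgt s i l = ω)
      = (Finset.range (d+1)).filter (fun i => wgt v i l = ω) := by
    apply Finset.filter_congr
    intro j hj
    rw [Finset.mem_range] at hj
    have hjd : j ≤ d := by omega
    have has := cnt_add s j l
    have hav := cnt_add v j l
    have hj1 := hd1 j hjd
    by_cases hcase : e < j + l
    · have hj2 := he (j + l) hcase
      constructor <;> intro hh <;> omega
    · push_neg at hcase
      have hjk : j ≤ k := by omega
      have hzs := Ws.w2 j (by omega)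
      have hzv := Wv.w2 j (by omega)
      have hms := cnt_mono s (show j + l ≤ e by omega)
      have hmv := cnt_mono v (show j + l ≤ e by omega)
      have hw4se := Ws.w4 e (by omega) (by omega)
      have hw4ve := Wv.w4 e (by omega) (by omega)
      constructor <;> intro hh <;> omega
  have hpart2s : (Finset.Ico (d+1) (d+k+2)).filter (fun i => wgt s i l = ω) = ∅ := by
    rw [Finset.filter_eq_empty_iff]
    intro j hj
    rw [Finset.mem_Ico] at hj
    have hw3 := Ws.w3 (j+l) (by omega) (by omega)
    have hlip := cnt_lip s (show d+1 ≤ j by omega)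
    have hadd := cnt_add s j l
    intro hcon
    omega
  have hpart2v : d+1 ∈ (Finset.Ico (d+1) (d+k+2)).filter (fun i => wgt v i l = ω) := by
    rw [Finset.mem_filter, Finset.mem_Ico]
    exact ⟨⟨le_rfl, by omega⟩, rfl⟩
  rw [hsplit, Finset.filter_union, Finset.filter_union,
    Finset.card_union_of_disjoint (Finset.disjoint_filter_filter hdisj),
    Finset.card_union_of_disjoint (Finset.disjoint_filter_filter hdisj),
    hpart1, hpart2s, Finset.card_empty]
  have hpos : 0 < ((Finset.Ico (d+1) (d+k+2)).filter (fun i => wgt v i l = ω)).card :=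
    Finset.card_pos.mpr ⟨d+1, hpart2v⟩
  omega

lemma cnt_succ (s : List Bool) (i : ℕ) (h : i < s.length) :
    cnt s (i+1) = cnt s i + (if s[i] = true then 1 else 0) := by
  unfold cnt
  rw [List.take_succ, List.count_append]
  congr 1
  rw [List.getElem?_eq_getElem h]
  cases hb : s[i] <;> simp [hb]

lemma eq_of_cnt_eq (s v : List Bool) (hlen : s.length = v.length)
    (h : ∀ x, cnt s x = cnt v x) : s = v := by
  apply List.ext_getElem hlen
  intro i h1 h2
  have hs := cnt_succ s i h1
  have hv := cnt_succ v i h2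
  have e1 := h i
  have e2 := h (i+1)
  cases hbs : s[i] <;> cases hbv : v[i] <;> rw [hbs] at hs <;> rw [hbv] at hv <;>
    simp at hs hv <;> omega

lemma ext_card (M1 M2 : Multiset (ℕ × ℕ)) (K N : ℕ) (g : ℕ → ℕ × ℕ)
    (hg : ∀ k, k ≤ K → ((g k).1 + (g k).2) + k = N ∧
      Multiset.count (g k) M1 < Multiset.count (g k) M2) :
    K + 1 ≤ Multiset.card (M2 - M1) := by
  classical
  have hsub : (Finset.range (K+1)).image g ⊆ (M2 - M1).toFinset := by
    intro y hy
    rw [Finset.mem_image] at hy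
    obtain ⟨k, hk, rfl⟩ := hy
    rw [Finset.mem_range] at hk
    rw [Multiset.mem_toFinset, ← Multiset.count_pos, Multiset.count_sub]
    have := (hg k (by omega)).2
    omega
  have hcard : ((Finset.range (K+1)).image g).card = K + 1 := by
    rw [Finset.card_image_of_injOn, Finset.card_range]
    intro i hi j hj hij
    rw [Finset.mem_coe, Finset.mem_range] at hi hj
    have h1 := (hg i (by omega)).1
    have h2 := (hg j (by omega)).1
    rw [hij] at h1
    omega
  calc K + 1 = ((Finset.range (K+1)).image g).card := hcard.symm
  _ ≤ (M2 - M1).toFinset.card := Finset.card_le_card hsub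
  _ ≤ Multiset.card (M2 - M1) := Multiset.toFinset_card_le _

/-- For `t ≥ 1`, even `n > 2(4t+1)`, and distinct `s, v ∈ C(n,t)`,
the multiset symmetric difference of their composition multisets has size at
least `4t+1`. -/
theorem codeCnt_symmDiff_ge (t n : ℕ) (ht : 1 ≤ t) (hn : Even n)
    (hbig : 2 * (4 * t + 1) < n)
    (s v : List Bool) (hs : s ∈ codeCnt n t) (hv : v ∈ codeCnt n t) (hne : s ≠ v) :
    4 * t + 1 ≤ ((compMS s - compMS v) + (compMS v - compMS s)).card := by
  classical
  have Ws := codeCnt_walk hs hbig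
  have Wv := codeCnt_walk hv hbig
  have htotS : 2 * cnt s n = n := by
    have := Ws.w3 n (by omega) le_rfl
    simpa using this
  have htotV : 2 * cnt v n = n := by
    have := Wv.w3 n (by omega) le_rfl
    simpa using this
  have hlarge : ∀ x, n ≤ x → cnt s x = cnt v x := by
    intro x hx
    have h1 := cnt_of_length_le s (x := x) (by rw [Ws.len]; omega)
    have h2 := cnt_of_length_le v (x := x) (by rw [Wv.len]; omega)
    rw [Ws.len] at h1
    rw [Wv.len] at h2
    omega
  have hPex : ∃ x, cnt s x ≠ cnt v x := by
    by_contra hcon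
    push_neg at hcon
    exact hne (eq_of_cnt_eq s v (by rw [Ws.len, Wv.len]) hcon)
  set x0 := Nat.find hPex with hx0def
  have hx0P : cnt s x0 ≠ cnt v x0 := Nat.find_spec hPex
  have hx0min : ∀ y, y < x0 → cnt s y = cnt v y := by
    intro y hy
    have := Nat.find_min hPex hy
    exact not_ne_iff.mp this
  have hsmall : ∀ x, x ≤ 4*t+1+1 → cnt s x = cnt v x := by
    intro x hx
    rcases le_or_gt x (4*t+1) with hc | hc
    · rw [Ws.w2 x hc, Wv.w2 x hc]
    · have w4s := Ws.w4 x (by omega) (by omega)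
      have w4v := Wv.w4 x (by omega) (by omega)
      omega
  have hx0big : 4*t+3 ≤ x0 := by
    by_contra hcon
    push_neg at hcon
    exact hx0P (hsmall x0 (by omega))
  have hx0n : x0 ≤ n := by
    by_contra hcon
    push_neg at hcon
    exact hx0P (hlarge x0 (by omega))
  set d := x0 - 1 with hddef
  have hd1 : ∀ x, x ≤ d → cnt s x = cnt v x := fun x hx => hx0min x (by omega)
  have hdd : cnt s (d+1) ≠ cnt v (d+1) := by
    rw [show d+1 = x0 by omega]
    exact hx0P
  have hdstep : cnt v (d+1) = cnt s (d+1) + 1 ∨ cnt s (d+1) = cnt v (d+1) + 1 := by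
    have l1 := cnt_lip s (show d ≤ d+1 by omega)
    have l2 := cnt_lip v (show d ≤ d+1 by omega)
    have m1 := cnt_mono s (show d ≤ d+1 by omega)
    have m2 := cnt_mono v (show d ≤ d+1 by omega)
    have := hd1 d le_rfl
    omega
  set e := Nat.findGreatest (fun x => cnt s x ≠ cnt v x) n with hedef
  have heP : cnt s e ≠ cnt v e := Nat.findGreatest_spec (P := fun x => cnt s x ≠ cnt v x) hx0n hx0P
  have he2 : ∀ x, e < x → cnt s x = cnt v x := by
    intro x hx
    rcases le_or_gt x n with hxn | hxn
    · have := Nat.findGreatest_is_greatest hx hxn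
      exact not_ne_iff.mp this
    · exact hlarge x (by omega)
  have hx0e : x0 ≤ e := Nat.le_findGreatest hx0n hx0P
  have hde : d ≤ e := by omega
  have hbig3 : ∀ x, n - (4*t+1) - 1 ≤ x → cnt s x = cnt v x := by
    intro x hx
    rcases le_or_gt (n - (4*t+1)) x with hc | hc
    · rcases le_or_gt x n with hc2 | hc2
      · have := Ws.w3 x hc hc2
        have := Wv.w3 x hc hc2
        omega
      · exact hlarge x (by omega)
    · have w4s := Ws.w4 x (by omega) (by omega)
      have w4v := Wv.w4 x (by omega) (by omega)
      have w3s := Ws.w3 (n - (4*t+1)) (by omega) (by omega)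
      have w3v := Wv.w3 (n - (4*t+1)) (by omega) (by omega)
      have lips := cnt_lip s (show x ≤ n - (4*t+1) by omega)
      have lipv := cnt_lip v (show x ≤ n - (4*t+1) by omega)
      have mons := cnt_mono s (show x ≤ n - (4*t+1) by omega)
      have monv := cnt_mono v (show x ≤ n - (4*t+1) by omega)
      omega
  have hea : e + (4*t+1) + 2 ≤ n := by
    by_contra hcon
    push_neg at hcon
    exact heP (hbig3 e (by omega))
  have hda : 4*t+2 ≤ d := by omega
  have KEY : ∃ D, ∀ k, k ≤ 2*t → ∃ x : ℕ × ℕ, ∃ l : ℕ,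
      x.1 + x.2 = l ∧ l + (D + k + 1) = n ∧ 1 ≤ l ∧
      (Multiset.count x (compLen l s) < Multiset.count x (compLen l v) ∨
       Multiset.count x (compLen l v) < Multiset.count x (compLen l s)) := by
    rcases le_or_gt (d + e + 1) n with hbr | hbr
    · refine ⟨d, ?_⟩
      intro k hk
      rcases hdstep with hor | hor
      · obtain ⟨z, w, l, h1, h2, h3, h4⟩ := core n t ht s v Ws Wv d e
          (fun x hx => (hd1 x hx).symm) hor (fun x hx => (he2 x hx).symm)
          (by omega) hde hea hbr k hk
        exact ⟨(z, w), l, h1, h2, by omega, Or.inl h4⟩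
      · obtain ⟨z, w, l, h1, h2, h3, h4⟩ := core n t ht v s Wv Ws d e
          (fun x hx => hd1 x hx) hor (fun x hx => he2 x hx)
          (by omega) hde hea hbr k hk
        exact ⟨(z, w), l, h1, h2, by omega, Or.inr h4⟩
    · -- mirror case
      set d' := n - 1 - e with hd'def
      set e' := n - 1 - d with he'def
      have hrlenS : (rc s).length = n := by rw [length_rc, Ws.len]
      have hrlenV : (rc v).length = n := by rw [length_rc, Wv.len]
      have Wrs := walk_rc Ws (by omega)
      have Wrv := walk_rc Wv (by omega)
      have hcntS : ∀ x, x ≤ n → cnt (rc s) x + cnt s n = x + cnt s (n - x) := by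
        intro x hx
        have := cnt_rc s (x := x) (by rw [Ws.len]; omega)
        rwa [Ws.len] at this
      have hcntV : ∀ x, x ≤ n → cnt (rc v) x + cnt v n = x + cnt v (n - x) := by
        intro x hx
        have := cnt_rc v (x := x) (by rw [Wv.len]; omega)
        rwa [Wv.len] at this
      have hrc_eq : ∀ x, x ≤ n → cnt s (n - x) = cnt v (n - x) →
          cnt (rc s) x = cnt (rc v) x := by
        intro x hx himp
        have := hcntS x hx
        have := hcntV x hx
        omega
      have hd1' : ∀ x, x ≤ d' → cnt (rc s) x = cnt (rc v) x := by
        intro x hx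
        exact hrc_eq x (by omega) (he2 (n - x) (by omega))
      have he2' : ∀ x, e' < x → cnt (rc s) x = cnt (rc v) x := by
        intro x hx
        rcases le_or_gt x n with hxn | hxn
        · exact hrc_eq x hxn (hd1 (n - x) (by omega))
        · have h1 := cnt_of_length_le (rc s) (x := x) (by rw [hrlenS]; omega)
          have h2 := cnt_of_length_le (rc v) (x := x) (by rw [hrlenV]; omega)
          rw [hrlenS] at h1
          rw [hrlenV] at h2
          have h3 : cnt (rc s) n = cnt (rc v) n := by
            apply hrc_eq n le_rfl
            rw [Nat.sub_self]
            rfl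
          omega
      have hstep' : cnt (rc v) (d'+1) = cnt (rc s) (d'+1) + 1 ∨
          cnt (rc s) (d'+1) = cnt (rc v) (d'+1) + 1 := by
        have h1 := hcntS (d'+1) (by omega)
        have h2 := hcntV (d'+1) (by omega)
        have h3 : n - (d'+1) = e := by omega
        rw [h3] at h1 h2
        have l1 := cnt_lip s (show e ≤ e+1 by omega)
        have l2 := cnt_lip v (show e ≤ e+1 by omega)
        have m1 := cnt_mono s (show e ≤ e+1 by omega)
        have m2 := cnt_mono v (show e ≤ e+1 by omega)
        have hee1 := he2 (e+1) (by omega)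
        omega
      refine ⟨d', ?_⟩
      intro k hk
      rcases hstep' with hor | hor
      · obtain ⟨z, w, l, h1, h2, h3, h4⟩ := core n t ht (rc s) (rc v) Wrs Wrv d' e'
          (fun x hx => (hd1' x hx).symm) hor (fun x hx => (he2' x hx).symm)
          (by omega) (by omega) (by omega) (by omega) k hk
        have hls : l ≤ s.length := by rw [Ws.len]; omega
        have hlv : l ≤ v.length := by rw [Wv.len]; omega
        rw [count_compLen_rc s l z w h1 hls, count_compLen_rc v l z w h1 hlv] at h4
        exact ⟨(w, z), l, by simp; omega, h2, by omega, Or.inl h4⟩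
      · obtain ⟨z, w, l, h1, h2, h3, h4⟩ := core n t ht (rc v) (rc s) Wrv Wrs d' e'
          (fun x hx => hd1' x hx) hor (fun x hx => he2' x hx)
          (by omega) (by omega) (by omega) (by omega) k hk
        have hls : l ≤ s.length := by rw [Ws.len]; omega
        have hlv : l ≤ v.length := by rw [Wv.len]; omega
        rw [count_compLen_rc s l z w h1 hls, count_compLen_rc v l z w h1 hlv] at h4
        exact ⟨(w, z), l, by simp; omega, h2, by omega, Or.inr h4⟩
  obtain ⟨D, hKEY⟩ := KEY
  have hK2 : ∀ k, k ≤ 2*t → ∃ x y : ℕ × ℕ,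
      ((x.1 + x.2) + k = n - D - 1) ∧ ((y.1 + y.2) + k = n - D - 1) ∧
      Multiset.count x (compMS s) < Multiset.count x (compMS v) ∧
      Multiset.count y (compMS v) < Multiset.count y (compMS s) := by
    intro k hk
    obtain ⟨x, l, hx1, hx2, hx3, hx4⟩ := hKEY k hk
    rcases hx4 with hlt | hlt
    · obtain ⟨y, hy1, hy2⟩ := sym_exists s v (by rw [Ws.len, Wv.len]) l
        (by rw [Ws.len]; omega) x hlt
      refine ⟨x, y, by omega, by omega, ?_, ?_⟩
      · rw [count_compMS s x (by omega), count_compMS v x (by omega), hx1]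
        exact hlt
      · rw [count_compMS s y (by omega), count_compMS v y (by omega), hy1]
        exact hy2
    · obtain ⟨y, hy1, hy2⟩ := sym_exists v s (by rw [Ws.len, Wv.len]) l
        (by rw [Wv.len]; omega) x hlt
      refine ⟨y, x, by omega, by omega, ?_, ?_⟩
      · rw [count_compMS s y (by omega), count_compMS v y (by omega), hy1]
        exact hy2
      · rw [count_compMS s x (by omega), count_compMS v x (by omega), hx1]
        exact hlt
  have hK3 : ∀ k, ∃ x y : ℕ × ℕ, k ≤ 2*t →
      ((x.1 + x.2) + k = n - D - 1) ∧ ((y.1 + y.2) + k = n - D - 1) ∧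
      Multiset.count x (compMS s) < Multiset.count x (compMS v) ∧
      Multiset.count y (compMS v) < Multiset.count y (compMS s) := by
    intro k
    by_cases hk : k ≤ 2*t
    · obtain ⟨x, y, h⟩ := hK2 k hk
      exact ⟨x, y, fun _ => h⟩
    · exact ⟨(0,0), (0,0), fun h => absurd h hk⟩
  choose X Y hXY using hK3
  have c1 := ext_card (compMS s) (compMS v) (2*t) (n - D - 1) X
    (fun k hk => ⟨((hXY k) hk).1, ((hXY k) hk).2.2.1⟩)
  have c2 := ext_card (compMS v) (compMS s) (2*t) (n - D - 1) Y
    (fun k hk => ⟨((hXY k) hk).2.1, ((hXY k) hk).2.2.2⟩)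
  rw [Multiset.card_add]
  omega
end

section
/- Let n be a positive integer and let s ∈ S_R(n). Then for every j with 1 ≤ j ≤ ⌊n/2⌋, the number of 1s in the prefix s_1…s_j differs from the number of 1s in the suffix s_{n+1−j}…s_n, i.e., wt(s_1…s_j) ≠ wt(s_{n+1−j}…s_n). -/
/-!
For `i < j`, the bits `s_i` and `s_{n-1-i}` contribute equally to the weights of the
prefix and of the suffix of length `j` unless they differ, and then `s_i = 1` favours the
prefix and `s_i = 0` the suffix. Hence the prefix weight minus the suffix weight is the
number of 1s minus the number of 0s among the first mismatched bits, which is negative by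
the Catalan-Bertrand condition, as position `0` is always mismatched. For odd `n` the
inserted middle bit lies in neither the prefix nor the suffix.
-/

namespace List

variable {α : Type*}

theorem take_take_append_singleton_append_drop {v : List α} {m j : ℕ} (b : α)
    (hm : m ≤ v.length) (hj : j ≤ m) : (v.take m ++ [b] ++ v.drop m).take j = v.take j := by
  rw [append_assoc, take_append_of_le_length (by simp; omega), take_take,
    Nat.min_eq_left hj]

theorem drop_take_append_singleton_append_drop {v : List α} {m j : ℕ} (b : α)
    (hm : m ≤ v.length) (hj : j ≤ v.length - m) :
    (v.take m ++ [b] ++ v.drop m).drop (v.length + 1 - j) = v.drop (v.length - j) := by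
  have hsplit : v.length + 1 - j = (v.take m ++ [b]).length + (v.length - j - m) := by
    simp only [length_append, length_take, length_singleton]
    omega
  rw [hsplit, drop_length_add_append, drop_drop]
  congr 1
  omega

end List

theorem IsCB.count_true_lt_count_false {w u : List Bool} (hw : IsCB w) (hu : u <+: w)
    (hne : u ≠ []) : u.count true < u.count false := by
  obtain ⟨t, rfl⟩ := hu
  simpa using hw u.length (List.length_pos_iff.mpr hne) (by simp)

/-- For `n = s.length`, the list constrained in `SReven n` is `mismatchBits s (n / 2)`. -/
def mismatchBits (s : List Bool) (j : ℕ) : List Bool :=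
  ((List.range j).filter fun i =>
    s.getD i false != s.getD (s.length - 1 - i) false).map fun i => s.getD i false

theorem mismatchBits_prefix (s : List Bool) {j k : ℕ} (h : j ≤ k) :
    mismatchBits s j <+: mismatchBits s k := by
  have hr : List.range j <+: List.range k := by
    obtain ⟨d, rfl⟩ := Nat.exists_eq_add_of_le h
    rw [List.range_add]
    exact List.prefix_append _ _
  exact (hr.filter _).map _

theorem mismatchBits_ne_nil {s : List Bool} {j : ℕ} (hj : 1 ≤ j)
    (h : s.getD 0 false ≠ s.getD (s.length - 1) false) : mismatchBits s j ≠ [] := by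
  have h0 : 0 ∈ (List.range j).filter fun i =>
      s.getD i false != s.getD (s.length - 1 - i) false := by
    simpa [List.mem_filter] using ⟨hj, h⟩
  exact List.ne_nil_of_mem (List.mem_map_of_mem h0)

theorem mismatchBits_succ (s : List Bool) (j : ℕ) :
    mismatchBits s (j + 1) = mismatchBits s j ++
      if s.getD j false != s.getD (s.length - 1 - j) false then [s.getD j false] else [] := by
  rw [mismatchBits, mismatchBits, List.range_succ, List.filter_append, List.map_append,
    List.filter_singleton]
  cases h : (s.getD j false != s.getD (s.length - 1 - j) false) <;> simp_all

theorem count_true_take_add_count_false_mismatchBits (s : List Bool) {j : ℕ}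
    (hj : j ≤ s.length) :
    (s.take j).count true + (mismatchBits s j).count false
      = (s.drop (s.length - j)).count true + (mismatchBits s j).count true := by
  induction j with
  | zero => simp [mismatchBits]
  | succ j ih =>
    have hfront : j < s.length := hj
    have hback : s.length - 1 - j < s.length := by omega
    have htake : s.take (j + 1) = s.take j ++ [s.getD j false] := by
      rw [List.take_add_one, List.getD_eq_getElem _ _ hfront, List.getElem?_eq_getElem hfront]
      rfl
    have hdrop : s.drop (s.length - (j + 1))
        = s.getD (s.length - 1 - j) false :: s.drop (s.length - j) := by
      rw [show s.length - (j + 1) = s.length - 1 - j by omega,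
        List.drop_eq_getElem_cons hback, List.getD_eq_getElem _ _ hback,
        show s.length - 1 - j + 1 = s.length - j by omega]
    have := ih hfront.le
    rw [htake, hdrop, mismatchBits_succ]
    cases s.getD j false <;> cases s.getD (s.length - 1 - j) false <;>
      simp [List.count_append] <;> omega

theorem count_true_take_lt_count_true_drop_of_mem_SReven {n : ℕ} {s : List Bool}
    (hs : s ∈ SReven n) {j : ℕ} (hj : 1 ≤ j) (hjn : j ≤ n / 2) :
    (s.take j).count true < (s.drop (n - j)).count true := by
  obtain ⟨rfl, hfirst, hlast, hcb⟩ := hs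
  have hcb : IsCB (mismatchBits s (s.length / 2)) := hcb
  have hlt := hcb.count_true_lt_count_false (mismatchBits_prefix s hjn)
    (mismatchBits_ne_nil hj (by rw [hfirst, hlast]; decide))
  have := count_true_take_add_count_false_mismatchBits s (hjn.trans (Nat.div_le_self _ _))
  omega

theorem SR_prefix_suffix_weight_ne_general (n : ℕ)
    (s : List Bool) (hs : s ∈ SR n) :
    ∀ j, 1 ≤ j → j ≤ n / 2 →
      (s.take j).count true ≠ (s.drop (n - j)).count true := by
  intro j hj hjn
  unfold SR at hs
  split_ifs at hs with hn
  · exact (count_true_take_lt_count_true_drop_of_mem_SReven hs hj hjn).ne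
  obtain ⟨v, hv, b, rfl⟩ := hs
  have hvlen : v.length = n - 1 := hv.1
  have hodd : n % 2 = 1 := Nat.odd_iff.mp (Nat.not_even_iff_odd.mp hn)
  rw [List.take_take_append_singleton_append_drop b (by omega) (by omega),
    show n - j = v.length + 1 - j by omega,
    List.drop_take_append_singleton_append_drop b (by omega) (by omega), hvlen]
  exact (count_true_take_lt_count_true_drop_of_mem_SReven hv hj (by omega)).ne

/-- For `s ∈ S_R(n)` and every `1 ≤ j ≤ ⌊n/2⌋`, the weight of the
prefix of length `j` differs from the weight of the suffix of length `j`. -/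
theorem SR_prefix_suffix_weight_ne (n : ℕ) (hn : 1 ≤ n)
    (s : List Bool) (hs : s ∈ SR n) :
    ∀ j, 1 ≤ j → j ≤ n / 2 →
      (s.take j).count true ≠ (s.drop (n - j)).count true :=
  SR_prefix_suffix_weight_ne_general n s hs
end

section
/- For every binary string s of length n and every j with 1 ≤ j ≤ ⌈n/2⌉, the identity w_j(s) = j·w_1(s) − Σ_{i=1}^{j−1} i·σ_{j−i}(s) holds (as an identity of integers). -/
lemma countTake (t : List Bool) : ∀ l, l ≤ t.length →
    ((t.take l).count true : ℤ) =
      ∑ k ∈ Finset.range l, (if t.getD k false then 1 else 0 : ℤ) := by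
  intro l
  induction l with
  | zero => simp
  | succ l ih =>
    intro h
    have hl : l < t.length := by omega
    rw [Finset.sum_range_succ, ← ih (by omega), List.take_succ,
      List.getElem?_eq_getElem hl]
    simp only [Option.toList_some, List.count_append, List.getD_eq_getElem?_getD,
      List.getElem?_eq_getElem hl, Option.getD_some]
    cases h' : t[l] <;> simp [h']

lemma keyId (g : ℕ → ℤ) (n : ℕ) : ∀ d, 2 * (d + 1) ≤ n + 1 →
    ∑ i ∈ Finset.range (n - d), ∑ k ∈ Finset.range (d + 1), g (i + k)
      = ((d + 1 : ℕ) : ℤ) * ∑ i ∈ Finset.range n, g i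
        - ∑ m ∈ Finset.range d, ((d - m : ℕ) : ℤ) * (g m + g (n - 1 - m)) := by
  intro d
  induction d with
  | zero => intro h; simp
  | succ d ih =>
    intro h
    have ih' := ih (by omega)
    -- split outer sum of LHS(d)
    have P1 : ∑ i ∈ Finset.range (n - d), ∑ k ∈ Finset.range (d + 1), g (i + k)
        = (∑ i ∈ Finset.range (n - (d+1)), ∑ k ∈ Finset.range (d + 1), g (i + k))
          + ∑ k ∈ Finset.range (d + 1), g ((n - (d+1)) + k) := by
      rw [show n - d = (n - (d+1)) + 1 by omega, Finset.sum_range_succ]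
    -- the tail equals the reflected sum
    have P4 : ∑ k ∈ Finset.range (d + 1), g ((n - (d+1)) + k)
        = ∑ m ∈ Finset.range (d + 1), g (n - 1 - m) := by
      rw [← Finset.sum_range_reflect (fun k => g ((n - (d+1)) + k)) (d+1)]
      apply Finset.sum_congr rfl
      intro m hm
      rw [Finset.mem_range] at hm
      congr 1
      omega
    -- shifted sum
    have P3 : ∑ i ∈ Finset.range (n - (d+1)), g (i + (d + 1))
        = (∑ i ∈ Finset.range n, g i) - ∑ i ∈ Finset.range (d+1), g i := by
      have := Finset.sum_Ico_eq_sum_range (f := g) (m := d+1) (n := n)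
      rw [show n - (d+1) = n - (d+1) from rfl]
      have h2 : ∑ i ∈ Finset.range (n - (d+1)), g (i + (d+1))
          = ∑ i ∈ Finset.Ico (d+1) n, g i := by
        rw [this]; apply Finset.sum_congr rfl; intro i _; rw [add_comm]
      rw [h2, Finset.sum_Ico_eq_sub _ (by omega)]
    -- split inner sums of LHS(d+1)
    have P2 : ∑ i ∈ Finset.range (n - (d+1)), ∑ k ∈ Finset.range (d + 1 + 1), g (i + k)
        = (∑ i ∈ Finset.range (n - (d+1)), ∑ k ∈ Finset.range (d + 1), g (i + k))
          + ∑ i ∈ Finset.range (n - (d+1)), g (i + (d + 1)) := by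
      simp only [Finset.sum_range_succ, Finset.sum_add_distrib]
    -- RHS coefficient step
    have P5 : ∑ m ∈ Finset.range (d + 1), ((d + 1 - m : ℕ) : ℤ) * (g m + g (n - 1 - m))
        = (∑ m ∈ Finset.range d, ((d - m : ℕ) : ℤ) * (g m + g (n - 1 - m)))
          + ∑ m ∈ Finset.range (d + 1), (g m + g (n - 1 - m)) := by
      have e : ∀ m ∈ Finset.range (d+1), ((d + 1 - m : ℕ) : ℤ) * (g m + g (n - 1 - m))
          = ((d - m : ℕ) : ℤ) * (g m + g (n - 1 - m)) + (g m + g (n - 1 - m)) := by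
        intro m hm
        rw [Finset.mem_range] at hm
        have : ((d + 1 - m : ℕ) : ℤ) = ((d - m : ℕ) : ℤ) + 1 := by
          push_cast [Nat.cast_sub (by omega : m ≤ d + 1), Nat.cast_sub (by omega : m ≤ d)]
          ring
        rw [this]; ring
      rw [Finset.sum_congr rfl e, Finset.sum_add_distrib, Finset.sum_range_succ]
      simp
    have P6 : ∑ m ∈ Finset.range (d + 1), (g m + g (n - 1 - m))
        = (∑ m ∈ Finset.range (d+1), g m) + ∑ m ∈ Finset.range (d+1), g (n - 1 - m) :=
      Finset.sum_add_distrib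
    rw [P2, P3, P5, P6]
    rw [P1, P4] at ih'
    push_cast at ih' ⊢
    linarith [ih']

/-- For every binary string `s` of length `n` and `1 ≤ j ≤ ⌈n/2⌉`,
`w_j(s) = j·w_1(s) − Σ_{i=1}^{j−1} i·σ_{j−i}(s)` as integers. -/
theorem cumW_eq_of_sigma (s : List Bool) (j : ℕ)
    (h1 : 1 ≤ j) (h2 : j ≤ (s.length + 1) / 2) :
    (cumW j s : ℤ) =
      (j : ℤ) * (cumW 1 s : ℤ) -
        ∑ i ∈ Finset.Icc 1 (j - 1), (i : ℤ) * (sigmaSeq s (j - i) : ℤ) := by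
  set n := s.length with hn
  set g : ℕ → ℤ := fun k => if s.getD k false then 1 else 0 with hg
  have h2j : 2 * j ≤ n + 1 := by omega
  have hc : ∀ l, 1 ≤ l → l ≤ n →
      (cumW l s : ℤ) = ∑ i ∈ Finset.range (n + 1 - l), ∑ k ∈ Finset.range l, g (i + k) := by
    intro l hl1 hl2
    rw [cumW]
    push_cast
    apply Finset.sum_congr rfl
    intro i hi
    rw [Finset.mem_range] at hi
    rw [countTake _ l (by rw [List.length_drop]; omega)]
    apply Finset.sum_congr rfl
    intro k hk
    simp only [hg, List.getD_eq_getElem?_getD, List.getElem?_drop]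
  -- cumW 1
  have hc1 : (cumW 1 s : ℤ) = ∑ i ∈ Finset.range n, g i := by
    rw [hc 1 le_rfl (by omega)]
    apply Finset.sum_congr rfl
    intro i _
    rw [Finset.sum_range_one, add_zero]
  -- cumW j
  have hcj : (cumW j s : ℤ) = ∑ i ∈ Finset.range (n - (j - 1)),
      ∑ k ∈ Finset.range ((j - 1) + 1), g (i + k) := by
    rw [hc j h1 (by omega), show (j - 1) + 1 = j by omega, show n - (j-1) = n + 1 - j by omega]
  -- sigma sum
  have hsig : ∑ i ∈ Finset.Icc 1 (j - 1), (i : ℤ) * (sigmaSeq s (j - i) : ℤ)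
      = ∑ m ∈ Finset.range (j - 1), ((j - 1 - m : ℕ) : ℤ) * (g m + g (n - 1 - m)) := by
    have e1 : ∀ i ∈ Finset.Icc 1 (j - 1), (i : ℤ) * (sigmaSeq s (j - i) : ℤ)
        = (i : ℤ) * (g (j - i - 1) + g (n - (j - i))) := by
      intro i hi
      rw [Finset.mem_Icc] at hi
      rw [sigmaSeq, if_pos (by omega : 2 * (j - i) ≤ s.length)]
      push_cast [apply_ite (fun m : ℕ => (m : ℤ))]
      rw [hg, hn]
    rw [Finset.sum_congr rfl e1]
    rw [show Finset.Icc 1 (j-1) = Finset.Ico 1 ((j-1)+1) by rw [Finset.Ico_add_one_right_eq_Icc],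
      Finset.sum_Ico_eq_sum_range]
    simp only [show (j - 1) + 1 - 1 = j - 1 from rfl]
    rw [← Finset.sum_range_reflect]
    apply Finset.sum_congr rfl
    intro m hm
    rw [Finset.mem_range] at hm
    have e2 : (1 : ℕ) + (j - 1 - 1 - m) = j - 1 - m := by omega
    rw [e2, show j - (j - 1 - m) - 1 = m by omega, show n - (j - (j - 1 - m)) = n - 1 - m by omega]
  rw [hcj, hc1, hsig, keyId g n (j - 1) (by omega), show (j - 1) + 1 = j by omega]
end

section
/- For every binary string s of length n and every i with 2 ≤ i ≤ ⌈n/2⌉ − 1, the identity σ_i(s) = 2·w_i(s) − w_{i−1}(s) − w_{i+1}(s) holds (as an identity of integers). In particular, knowledge of w_{i−1}(s), w_i(s) and w_{i+1}(s) determines σ_i(s). -/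
/-- For every binary string `s` of length `n` and
`2 ≤ i ≤ ⌈n/2⌉ − 1`, `σ_i(s) = 2·w_i(s) − w_{i−1}(s) − w_{i+1}(s)` as integers. -/
theorem sigma_eq_cumW (s : List Bool) (i : ℕ)
    (h1 : 2 ≤ i) (h2 : i ≤ (s.length + 1) / 2 - 1) :
    (sigmaSeq s i : ℤ) =
      2 * (cumW i s : ℤ) - (cumW (i - 1) s : ℤ) - (cumW (i + 1) s : ℤ) := by
  set n := s.length with hn
  have hni : 2 * i + 2 ≤ n + 1 := by omega
  set P : ℕ → ℤ := fun k => ((s.take k).count true : ℤ) with hP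
  have step : ∀ k, k < n → P (k + 1) = P k + (if s.getD k false then 1 else 0) := by
    intro k h
    simp only [hP]
    rw [List.take_succ, List.getElem?_eq_getElem h, List.count_append,
        List.getD_eq_getElem?_getD, List.getElem?_eq_getElem h]
    cases h' : s[k] <;> simp [h']
  set T : ℕ → ℤ := fun m => ∑ k ∈ Finset.range m, P k with hT
  have keyS : ∀ l, l ≤ n + 1 → (cumW l s : ℤ) = T (n + 1) - T l - T (n + 1 - l) := by
    intro l hl
    have key : (cumW l s : ℤ) = ∑ j ∈ Finset.range (n + 1 - l), (P (j + l) - P j) := by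
      rw [cumW]
      push_cast
      refine Finset.sum_congr rfl fun j _ => ?_
      have ht : s.take (j + l) = s.take j ++ (s.drop j).take l := List.take_add ..
      simp only [hP, ht, List.count_append]
      push_cast; ring
    have hsplit : T (l + (n + 1 - l)) = T l + ∑ x ∈ Finset.range (n + 1 - l), P (l + x) :=
      Finset.sum_range_add P l (n + 1 - l)
    rw [show l + (n + 1 - l) = n + 1 by omega] at hsplit
    rw [key, Finset.sum_sub_distrib]
    have : ∑ j ∈ Finset.range (n + 1 - l), P (j + l)
        = ∑ x ∈ Finset.range (n + 1 - l), P (l + x) :=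
      Finset.sum_congr rfl fun j _ => by rw [Nat.add_comm]
    rw [this]
    simp only [hT] at hsplit ⊢
    linarith
  have e1 : (cumW i s : ℤ) = T (n + 1) - T i - T (n - i + 1) := by
    have := keyS i (by omega); rwa [show n + 1 - i = n - i + 1 by omega] at this
  have e2 : (cumW (i - 1) s : ℤ) = T (n + 1) - T (i - 1) - T (n - i + 2) := by
    have := keyS (i - 1) (by omega)
    rwa [show n + 1 - (i - 1) = n - i + 2 by omega] at this
  have e3 : (cumW (i + 1) s : ℤ) = T (n + 1) - T (i + 1) - T (n - i) := by
    have := keyS (i + 1) (by omega)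
    rwa [show n + 1 - (i + 1) = n - i by omega] at this
  have t1 : T i = T (i - 1) + P (i - 1) := by
    rw [show i = i - 1 + 1 by omega]; exact Finset.sum_range_succ P (i - 1)
  have t2 : T (i + 1) = T i + P i := Finset.sum_range_succ P i
  have t3 : T (n - i + 1) = T (n - i) + P (n - i) := Finset.sum_range_succ P (n - i)
  have t4 : T (n - i + 2) = T (n - i + 1) + P (n - i + 1) := Finset.sum_range_succ P (n - i + 1)
  have s1 : P i = P (i - 1) + (if s.getD (i - 1) false then 1 else 0) := by
    have := step (i - 1) (by omega)
    rwa [show i - 1 + 1 = i by omega] at this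
  have s2 : P (n - i + 1) = P (n - i) + (if s.getD (n - i) false then 1 else 0) := by
    exact step (n - i) (by omega)
  rw [sigmaSeq, if_pos (show 2 * i ≤ s.length by omega), ← hn]
  push_cast
  rw [e1, e2, e3]
  linarith [t1, t2, t3, t4, s1, s2]
end

section
/- Let s and v be binary strings of length n and let j satisfy 1 ≤ j ≤ ⌈n/2⌉. If w_1(s) = w_1(v), σ_i(s) = σ_i(v) for all 1 ≤ i ≤ j−2, and w_j(s) ≡ w_j(v) (mod 3), then w_j(s) = w_j(v). (Equivalently: given w_1 and σ_1,…,σ_{j−2}, the value of w_j mod 3 uniquely determines w_j.) -/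
def bitV (s : List Bool) (k : ℕ) : ℕ := if s.getD k false then 1 else 0

lemma count_true_eq_sum (l : List Bool) :
    l.count true = ∑ t ∈ Finset.range l.length, bitV l t := by
  induction l with
  | nil => simp
  | cons a l ih =>
    rw [List.length_cons, Finset.sum_range_succ']
    simp only [List.count_cons, bitV, ih, List.getD_cons_succ, List.getD_cons_zero]
    cases a <;> simp

lemma window_count (s : List Bool) (i j : ℕ) (h : i + j ≤ s.length) :
    ((s.drop i).take j).count true = ∑ t ∈ Finset.range j, bitV s (i + t) := by
  rw [count_true_eq_sum]
  have hlen : ((s.drop i).take j).length = j := by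
    simp only [List.length_take, List.length_drop]; omega
  rw [hlen]
  refine Finset.sum_congr rfl fun t ht => ?_
  simp only [Finset.mem_range] at ht
  simp only [bitV, List.getD]
  simp only [List.getElem?_take_of_lt ht, List.getElem?_drop]
  rfl

lemma conv_card (A j k n : ℕ) (hn : n + 1 = A + j) (hj : 1 ≤ j) (hA : j ≤ A) (hk : k < n) :
    ((Finset.range A ×ˢ Finset.range j).filter (fun p => p.1 + p.2 = k)).card
      = min (k + 1) (min (n - k) j) := by
  have himg : (Finset.range A ×ˢ Finset.range j).filter (fun p => p.1 + p.2 = k)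
      = (Finset.Ico (k + 1 - j) (min (k + 1) A)).image (fun i => (i, k - i)) := by
    ext ⟨x, y⟩
    simp only [Finset.mem_filter, Finset.mem_product, Finset.mem_range, Finset.mem_image,
      Finset.mem_Ico, Prod.mk.injEq]
    constructor
    · rintro ⟨⟨hx, hy⟩, hxy⟩
      exact ⟨x, by omega, rfl, by omega⟩
    · rintro ⟨i, hi, rfl, rfl⟩
      omega
  rw [himg, Finset.card_image_of_injective _ (fun a b hab => by
    simpa using congrArg Prod.fst hab), Nat.card_Ico]
  omega

lemma cumW_eq (n j : ℕ) (s : List Bool) (hs : s.length = n) (hj : 1 ≤ j)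
    (h2 : 2 * j ≤ n + 1) :
    cumW j s = ∑ k ∈ Finset.range n, min (k + 1) (min (n - k) j) * bitV s k := by
  set A := n + 1 - j with hA
  have hAn : n + 1 = A + j := by omega
  have hjA : j ≤ A := by omega
  unfold cumW
  rw [hs]
  calc ∑ i ∈ Finset.range (n + 1 - j), ((s.drop i).take j).count true
      = ∑ i ∈ Finset.range A, ∑ t ∈ Finset.range j, bitV s (i + t) := by
        refine Finset.sum_congr rfl fun i hi => ?_
        refine window_count s i j ?_
        simp only [Finset.mem_range] at hi; omega
    _ = ∑ p ∈ Finset.range A ×ˢ Finset.range j, bitV s (p.1 + p.2) := by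
        rw [Finset.sum_product]
    _ = ∑ k ∈ Finset.range n, ∑ p ∈ (Finset.range A ×ˢ Finset.range j).filter
          (fun p => p.1 + p.2 = k), bitV s (p.1 + p.2) := by
        refine (Finset.sum_fiberwise_of_maps_to ?_ _).symm
        intro p hp
        simp only [Finset.mem_product, Finset.mem_range] at hp ⊢
        omega
    _ = ∑ k ∈ Finset.range n, min (k + 1) (min (n - k) j) * bitV s k := by
        refine Finset.sum_congr rfl fun k hk => ?_
        simp only [Finset.mem_range] at hk
        rw [← conv_card A j k n hAn hj hjA hk]
        rw [Finset.sum_congr rfl (fun p hp => ?_), Finset.sum_const, smul_eq_mul]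
        simp only [Finset.mem_filter] at hp
        rw [hp.2]

lemma sigma_expand (s : List Bool) (n i : ℕ) (hs : s.length = n) :
    sigmaSeq s (i + 1) = bitV s i + (if i < n / 2 then bitV s (n - 1 - i) else 0) := by
  unfold sigmaSeq bitV
  rw [hs]
  rcases Nat.lt_or_ge i (n / 2) with h | h
  · rw [if_pos (by omega : 2 * (i + 1) ≤ n), if_pos h]
    have : n - (i + 1) = n - 1 - i := by omega
    simp [this]
  · rw [if_neg (by omega : ¬ 2 * (i + 1) ≤ n), if_neg (by omega : ¬ i < n / 2)]
    simp

lemma pairing (G : ℕ → ℕ) (n : ℕ) (s : List Bool) (hs : s.length = n) :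
    ∑ k ∈ Finset.range n, G (min (k + 1) (n - k)) * bitV s k
      = ∑ i ∈ Finset.range ((n + 1) / 2), G (i + 1) * sigmaSeq s (i + 1) := by
  have hsplit : Finset.range n
      = Finset.range ((n + 1) / 2) ∪ (Finset.range (n / 2)).image (fun i => n - 1 - i) := by
    ext k
    simp only [Finset.mem_union, Finset.mem_range, Finset.mem_image]
    constructor
    · intro hk
      rcases Nat.lt_or_ge k ((n + 1) / 2) with h | h
      · exact Or.inl h
      · exact Or.inr ⟨n - 1 - k, by omega, by omega⟩
    · rintro (h | ⟨i, hi, rfl⟩) <;> omega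
  have hdisj : Disjoint (Finset.range ((n + 1) / 2))
      ((Finset.range (n / 2)).image (fun i => n - 1 - i)) := by
    rw [Finset.disjoint_left]
    intro k hk hk'
    simp only [Finset.mem_range] at hk
    simp only [Finset.mem_image, Finset.mem_range] at hk'
    obtain ⟨i, hi, rfl⟩ := hk'
    omega
  rw [hsplit, Finset.sum_union hdisj,
    Finset.sum_image (fun a ha b hb hab => by
      simp only [Finset.coe_range, Set.mem_Iio] at ha hb; omega)]
  have hR : ∑ i ∈ Finset.range ((n + 1) / 2), G (i + 1) * sigmaSeq s (i + 1)
      = (∑ i ∈ Finset.range ((n + 1) / 2), G (i + 1) * bitV s i)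
        + ∑ i ∈ Finset.range (n / 2), G (i + 1) * bitV s (n - 1 - i) := by
    have : ∀ i ∈ Finset.range ((n + 1) / 2), G (i + 1) * sigmaSeq s (i + 1)
        = G (i + 1) * bitV s i + (if i < n / 2 then G (i + 1) * bitV s (n - 1 - i) else 0) := by
      intro i hi
      rw [sigma_expand s n i hs, Nat.mul_add]
      congr 1
      split <;> simp
    rw [Finset.sum_congr rfl this, Finset.sum_add_distrib]
    congr 1
    rw [← Finset.sum_filter]
    congr 1
    ext i
    simp only [Finset.mem_filter, Finset.mem_range]
    omega
  rw [hR]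
  congr 1
  · refine Finset.sum_congr rfl fun i hi => ?_
    simp only [Finset.mem_range] at hi
    congr 2
    omega
  · refine Finset.sum_congr rfl fun i hi => ?_
    simp only [Finset.mem_range] at hi
    congr 2
    omega

lemma sigma_le_two (s : List Bool) (i : ℕ) : sigmaSeq s i ≤ 2 := by
  unfold sigmaSeq
  split <;> split_ifs <;> omega

lemma cumW_sigma (n j : ℕ) (s : List Bool) (hs : s.length = n) (hj : 1 ≤ j)
    (h2 : 2 * j ≤ n + 1) :
    cumW j s = ∑ i ∈ Finset.range ((n + 1) / 2), min (i + 1) j * sigmaSeq s (i + 1) := by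
  rw [cumW_eq n j s hs hj h2, ← pairing (fun x => min x j) n s hs]
  refine Finset.sum_congr rfl fun k hk => ?_
  congr 1
  rw [min_assoc]

lemma cumW_one (n : ℕ) (s : List Bool) (hs : s.length = n) (hn : 1 ≤ n) :
    cumW 1 s = ∑ i ∈ Finset.range ((n + 1) / 2), sigmaSeq s (i + 1) := by
  rw [cumW_eq n 1 s hs le_rfl (by omega)]
  have hp := pairing (fun _ => 1) n s hs
  simp only [one_mul] at hp
  rw [← hp]
  refine Finset.sum_congr rfl fun k hk => ?_
  simp only [Finset.mem_range] at hk
  have h1 : min (k + 1) (min (n - k) 1) = 1 := by omega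
  rw [h1, one_mul]

/-- For strings `s, v` of length `n` and `1 ≤ j ≤ ⌈n/2⌉`: if
`w_1(s) = w_1(v)`, `σ_i(s) = σ_i(v)` for all `1 ≤ i ≤ j−2`, and `w_j(s) ≡ w_j(v) (mod 3)`,
then `w_j(s) = w_j(v)`. -/
theorem cumW_determined_mod_three (n : ℕ) (s v : List Bool)
    (hs : s.length = n) (hv : v.length = n)
    (j : ℕ) (h1 : 1 ≤ j) (h2 : j ≤ (n + 1) / 2)
    (hw1 : cumW 1 s = cumW 1 v)
    (hσ : ∀ i, 1 ≤ i → i ≤ j - 2 → sigmaSeq s i = sigmaSeq v i)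
    (hmod : cumW j s % 3 = cumW j v % 3) :
    cumW j s = cumW j v := by
  set m := (n + 1) / 2 with hm
  have hn : 1 ≤ n := by omega
  have h2j : 2 * j ≤ n + 1 := by omega
  -- key identities over ℤ
  have hks : (cumW j s : ℤ)
      = ∑ i ∈ Finset.range m, (min (i + 1) j : ℤ) * (sigmaSeq s (i + 1) : ℤ) := by
    rw [cumW_sigma n j s hs h1 h2j]; push_cast; rfl
  have hkv : (cumW j v : ℤ)
      = ∑ i ∈ Finset.range m, (min (i + 1) j : ℤ) * (sigmaSeq v (i + 1) : ℤ) := by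
    rw [cumW_sigma n j v hv h1 h2j]; push_cast; rfl
  have hsum : ∑ i ∈ Finset.range m, ((sigmaSeq s (i + 1) : ℤ) - (sigmaSeq v (i + 1) : ℤ)) = 0 := by
    rw [Finset.sum_sub_distrib]
    have hws : (cumW 1 s : ℤ) = ∑ i ∈ Finset.range m, (sigmaSeq s (i + 1) : ℤ) := by
      rw [cumW_one n s hs hn]; push_cast; rfl
    have hwv : (cumW 1 v : ℤ) = ∑ i ∈ Finset.range m, (sigmaSeq v (i + 1) : ℤ) := by
      rw [cumW_one n v hv hn]; push_cast; rfl
    rw [← hws, ← hwv, hw1]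
    ring
  have hD : (cumW j s : ℤ) - (cumW j v : ℤ)
      = ∑ i ∈ Finset.range m, ((min (i + 1) j : ℤ) - (j : ℤ))
          * ((sigmaSeq s (i + 1) : ℤ) - (sigmaSeq v (i + 1) : ℤ)) := by
    rw [hks, hkv, ← Finset.sum_sub_distrib]
    have : ∑ i ∈ Finset.range m, ((min (i + 1) j : ℤ) - (j : ℤ))
          * ((sigmaSeq s (i + 1) : ℤ) - (sigmaSeq v (i + 1) : ℤ))
        = (∑ i ∈ Finset.range m, ((min (i + 1) j : ℤ) * (sigmaSeq s (i + 1) : ℤ)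
            - (min (i + 1) j : ℤ) * (sigmaSeq v (i + 1) : ℤ)))
          - (j : ℤ) * ∑ i ∈ Finset.range m,
              ((sigmaSeq s (i + 1) : ℤ) - (sigmaSeq v (i + 1) : ℤ)) := by
      rw [Finset.mul_sum, ← Finset.sum_sub_distrib]
      refine Finset.sum_congr rfl fun i _ => ?_
      ring
    rw [this, hsum]
    ring
  have hsingle : ∑ i ∈ Finset.range m, ((min (i + 1) j : ℤ) - (j : ℤ))
        * ((sigmaSeq s (i + 1) : ℤ) - (sigmaSeq v (i + 1) : ℤ))
      = ((((j - 2 : ℕ) : ℤ) + 1) ⊓ (j : ℤ) - (j : ℤ))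
        * ((sigmaSeq s (j - 2 + 1) : ℤ) - (sigmaSeq v (j - 2 + 1) : ℤ)) := by
    refine Finset.sum_eq_single_of_mem (j - 2) (Finset.mem_range.mpr (by omega)) ?_
    intro i hi hne
    rcases Nat.lt_or_ge i (j - 1) with h | h
    · have heq : sigmaSeq s (i + 1) = sigmaSeq v (i + 1) :=
        hσ (i + 1) (by omega) (by omega)
      rw [heq]; ring
    · have heq : ((i : ℤ) + 1) ⊓ (j : ℤ) = (j : ℤ) := by omega
      rw [heq]; ring
  rw [hsingle] at hD
  have hb1 : sigmaSeq s (j - 2 + 1) ≤ 2 := sigma_le_two s _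
  have hb2 : sigmaSeq v (j - 2 + 1) ≤ 2 := sigma_le_two v _
  have hdvd : (3 : ℤ) ∣ (cumW j v : ℤ) - (cumW j s : ℤ) :=
    (Nat.modEq_iff_dvd (n := 3)).mp hmod
  rcases Nat.lt_or_ge j 2 with hj2 | hj2
  · have hmin1 : (((j - 2 : ℕ) : ℤ) + 1) ⊓ (j : ℤ) = (j : ℤ) := by omega
    rw [hmin1] at hD
    have hD' : (cumW j s : ℤ) - (cumW j v : ℤ) = 0 := by rw [hD]; ring
    omega
  · have hmin1 : (((j - 2 : ℕ) : ℤ) + 1) ⊓ (j : ℤ) = (j : ℤ) - 1 := by omega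
    rw [hmin1] at hD
    have hD' : (cumW j s : ℤ) - (cumW j v : ℤ)
        = -((sigmaSeq s (j - 2 + 1) : ℤ) - (sigmaSeq v (j - 2 + 1) : ℤ)) := by
      rw [hD]; ring
    omega
end

section
/- Let n be odd and suppose that 3 divides ⌈n/2⌉ or 3 divides ⌈n/2⌉ + 1. Let s = s_1…s_{⌈n/2⌉}…s_n ∈ {0,1}^n and let s' be the string obtained from s by flipping the middle bit, i.e., s' = s_1…(1−s_{⌈n/2⌉})…s_n. Then Σ_{i=1}^{⌈n/2⌉} w_i(s) ≡ Σ_{i=1}^{⌈n/2⌉} w_i(s') (mod 3). -/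
/-!
Flipping the bit at position `j` changes `w_l` by `±N`, where `N` is the number of length-`l`
windows containing `j`. For the middle bit of a string of odd length `n` and `l ≤ m = ⌈n/2⌉`,
exactly `l` windows contain it, so the whole sum changes by `±(1 + ⋯ + m) = ±m(m+1)/2`,
which is divisible by `3` when `3 ∣ m` or `3 ∣ m + 1`.
-/

open Finset

lemma List.count_true_set_add {w : List Bool} {k : ℕ} (hk : k < w.length) (b : Bool) :
    (w.set k b).count true + (w.getD k false).toNat = w.count true + b.toNat := by
  rw [List.count_set hk, List.getD_eq_getElem _ _ hk]
  have := List.boole_getElem_le_count (a := true) hk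
  cases b <;> cases h : w[k] <;> simp_all [Bool.toNat]

lemma List.take_drop_set_of_le {α : Type*} {l : List α} {i j : ℕ} (h : i ≤ j) (m : ℕ) (x : α) :
    ((l.set j x).drop i).take m = ((l.drop i).take m).set (j - i) x := by
  rw [List.drop_set, if_neg (by omega), List.take_set]

def windowsThrough (n l j : ℕ) : Finset ℕ :=
  (range (n + 1 - l)).filter fun a => a ≤ j ∧ j < a + l

lemma count_true_window_set_add {s : List Bool} {j : ℕ} (hj : j < s.length) (b : Bool)
    (l a : ℕ) :
    (((s.set j b).drop a).take l).count true +
        (if a ≤ j ∧ j < a + l then (s.getD j false).toNat else 0) =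
      ((s.drop a).take l).count true + (if a ≤ j ∧ j < a + l then b.toNat else 0) := by
  by_cases hin : a ≤ j ∧ j < a + l
  · have hk : j - a < ((s.drop a).take l).length := by simp; omega
    have hget : ((s.drop a).take l).getD (j - a) false = s.getD j false := by
      rw [List.getD_eq_getElem?_getD, List.getElem?_take_of_lt (by omega), List.getElem?_drop,
        Nat.add_sub_cancel' hin.1, List.getD_eq_getElem?_getD]
    rw [if_pos hin, if_pos hin, List.take_drop_set_of_le hin.1, ← hget,
      List.count_true_set_add hk]
  · rw [if_neg hin, if_neg hin]
    by_cases hja : j < a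
    · rw [List.drop_set, if_pos hja]
    · rw [List.take_drop_set_of_le (by omega), List.set_eq_of_length_le (by simp; omega)]

lemma cumW_set_add (s : List Bool) {j : ℕ} (hj : j < s.length) (b : Bool) (l : ℕ) :
    cumW l (s.set j b) + #(windowsThrough s.length l j) * (s.getD j false).toNat =
      cumW l s + #(windowsThrough s.length l j) * b.toNat := by
  simp only [cumW, windowsThrough, List.length_set, card_filter, sum_mul, ite_mul, one_mul,
    zero_mul, ← sum_add_distrib]
  exact sum_congr rfl fun a _ => count_true_window_set_add hj b l a

lemma card_windowsThrough {n l j : ℕ} (h₁ : l ≤ j + 1) (h₂ : j + l ≤ n) :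
    #(windowsThrough n l j) = l := by
  have : windowsThrough n l j = Ico (j + 1 - l) (j + 1) := by
    ext a
    simp only [windowsThrough, mem_filter, mem_range, mem_Ico]
    omega
  rw [this, Nat.card_Ico]
  omega

lemma sum_Icc_one_id_mul_two (m : ℕ) : (∑ i ∈ Icc 1 m, i) * 2 = m * (m + 1) := by
  induction m with
  | zero => rfl
  | succ k ih => rw [sum_Icc_succ_top (by omega), add_mul, ih]; ring

lemma dvd_sum_Icc_one_id {d m : ℕ} (hd : d.Coprime 2) (h : d ∣ m * (m + 1)) :
    d ∣ ∑ i ∈ Icc 1 m, i :=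
  hd.dvd_of_dvd_mul_right (sum_Icc_one_id_mul_two m ▸ h)

/-- Let `n` be odd with `3 ∣ ⌈n/2⌉` or `3 ∣ ⌈n/2⌉ + 1`, and let `s'`
be `s` with the middle bit flipped. Then `Σ_{i=1}^{⌈n/2⌉} w_i(s) ≡ Σ_{i=1}^{⌈n/2⌉} w_i(s')
(mod 3)`. -/
theorem middle_flip_invariant_mod_three (n : ℕ) (hodd : Odd n)
    (h3 : 3 ∣ (n + 1) / 2 ∨ 3 ∣ (n + 1) / 2 + 1)
    (s : List Bool) (hs : s.length = n) :
    (∑ i ∈ Finset.Icc 1 ((n + 1) / 2), cumW i s) % 3 =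
      (∑ i ∈ Finset.Icc 1 ((n + 1) / 2),
        cumW i (s.set ((n - 1) / 2) (! s.getD ((n - 1) / 2) false))) % 3 := by
  obtain ⟨k, rfl⟩ := hodd
  simp only [show (2 * k + 1 + 1) / 2 = k + 1 by omega, show (2 * k + 1 - 1) / 2 = k by omega]
    at h3 ⊢
  set x := s.getD k false
  have hflip : ∀ l ∈ Icc 1 (k + 1),
      cumW l (s.set k !x) + l * x.toNat = cumW l s + l * (!x).toNat := by
    intro l hl
    rw [mem_Icc] at hl
    have := cumW_set_add s (j := k) (by omega) (!x) l
    rwa [card_windowsThrough (by omega) (by omega)] at this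
  have hsum := sum_congr rfl hflip
  rw [sum_add_distrib, sum_add_distrib, ← sum_mul, ← sum_mul] at hsum
  obtain ⟨c, hc⟩ : 3 ∣ ∑ l ∈ Icc 1 (k + 1), l :=
    dvd_sum_Icc_one_id (by norm_num) (h3.elim (Dvd.dvd.mul_right · _) (Dvd.dvd.mul_left · _))
  rw [hc, mul_assoc, mul_assoc] at hsum
  omega
end

section
/- Let n be odd with ⌈n/2⌉ divisible by 3. Then for every x = x_1…x_{n−2} ∈ {0,1}^{n−2} there exist bits c₁, c₂ ∈ {0,1} with c₁ ≤ c₂ such that the string s = x_1 c₁ x_2 x_3 … x_{n−3} c₂ x_{n−2} ∈ {0,1}^n (obtained by inserting c₁ at position 2 and c₂ at position n−1) satisfies Σ_{i=1}^{⌈n/2⌉} w_i(s) ≡ 0 (mod 3). -/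
open Finset

def numWindowsCovering (N l p : ℕ) : ℕ :=
  #{i ∈ range (N + 1 - l) | i ≤ p ∧ p < i + l}

lemma numWindowsCovering_eq {N l : ℕ} (p : ℕ) (hl : l ≤ N) :
    numWindowsCovering N l p = min p (N - l) + 1 - (p + 1 - l) := by
  have : {i ∈ range (N + 1 - l) | i ≤ p ∧ p < i + l} =
      Ico (p + 1 - l) (min p (N - l) + 1) := by
    ext i
    simp only [mem_filter, mem_range, mem_Ico]
    omega
  rw [numWindowsCovering, this, Nat.card_Ico]

lemma count_true_window_set {L : List Bool} {p : ℕ} (hp : p < L.length) (hLp : L[p] = false)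
    (c : Bool) (i l : ℕ) :
    (((L.set p c).drop i).take l).count true =
      ((L.drop i).take l).count true + if i ≤ p ∧ p < i + l then c.toNat else 0 := by
  rw [List.drop_set]
  split_ifs with hpi hwin hwin
  · omega
  · simp
  · rw [List.take_set, List.count_set (by simp; omega)]
    simp only [List.getElem_take, List.getElem_drop, Nat.add_sub_cancel' hwin.1, hLp]
    cases c <;> rfl
  · rw [List.take_set, List.set_eq_of_length_le (by simp; omega)]
    simp

lemma cumW_set {L : List Bool} {p : ℕ} (hp : p < L.length) (hLp : L[p] = false) (c : Bool)
    (l : ℕ) : cumW l (L.set p c) = cumW l L + c.toNat * numWindowsCovering L.length l p := by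
  simp only [cumW, List.length_set, count_true_window_set hp hLp, sum_add_distrib,
    numWindowsCovering, sum_ite, sum_const_zero, sum_const, smul_eq_mul, add_zero, mul_comm]

lemma sum_cumW_set {L : List Bool} {p : ℕ} (hp : p < L.length) (hLp : L[p] = false) (c : Bool)
    (m : ℕ) :
    ∑ l ∈ Icc 1 m, cumW l (L.set p c) =
      ∑ l ∈ Icc 1 m, cumW l L +
        c.toNat * ∑ l ∈ Icc 1 m, numWindowsCovering L.length l p := by
  simp only [cumW_set hp hLp, sum_add_distrib, mul_sum]

lemma sum_numWindowsCovering_of_edge {N m p : ℕ} (hN : N = 2 * m - 1) (hm : 2 ≤ m)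
    (hp : p = 1 ∨ p = N - 2) : ∑ l ∈ Icc 1 m, numWindowsCovering N l p = 2 * m - 1 := by
  have hcount : ∀ l ∈ Ioc 1 m, numWindowsCovering N l p = 2 := by
    intro l hl
    rw [mem_Ioc] at hl
    rw [numWindowsCovering_eq p (by omega)]
    omega
  rw [Icc_eq_cons_Ioc (by omega), sum_cons, sum_congr rfl hcount,
    numWindowsCovering_eq p (by omega), sum_const, Nat.card_Ioc, smul_eq_mul]
  omega

lemma append_singleton_append_singleton_eq_set_set {α : Type*} (A C D : List α)
    (a b a₀ b₀ : α) :
    A ++ [a] ++ C ++ [b] ++ D =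
      ((A ++ [a₀] ++ C ++ [b₀] ++ D).set A.length a).set (A.length + 1 + C.length) b := by
  simp [List.set_append, show A.length + 1 + C.length - A.length = C.length + 1 by omega,
    show ¬ A.length + 1 + C.length < A.length by omega]

lemma sum_cumW_insert_two (A C D : List Bool) (a b : Bool) (m : ℕ) :
    ∑ l ∈ Icc 1 m, cumW l (A ++ [a] ++ C ++ [b] ++ D) =
      ∑ l ∈ Icc 1 m, cumW l (A ++ [false] ++ C ++ [false] ++ D) +
        a.toNat * ∑ l ∈ Icc 1 m,
          numWindowsCovering (A.length + C.length + D.length + 2) l A.length +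
        b.toNat * ∑ l ∈ Icc 1 m,
          numWindowsCovering (A.length + C.length + D.length + 2) l (A.length + 1 + C.length) := by
  set L := A ++ [false] ++ C ++ [false] ++ D
  have hL : L.length = A.length + C.length + D.length + 2 := by simp [L]; omega
  have hLa : L[A.length]'(by omega) = false := by simp [L]
  have hLb : (L.set A.length a)[A.length + 1 + C.length]'(by simp; omega) = false := by
    rw [List.getElem_set_ne (by omega), List.getElem_append_left (by simp; omega),
      List.getElem_append_right (by simp; omega)]
    simp
  rw [append_singleton_append_singleton_eq_set_set A C D a b false false, sum_cumW_set _ hLb,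
    sum_cumW_set _ hLa, List.length_set, hL]

/-- Let `n` be odd with `3 ∣ ⌈n/2⌉`. For every `x ∈ {0,1}^{n−2}`
there exist bits `c₁ ≤ c₂` such that inserting `c₁` at position 2 and `c₂` at
position `n−1` yields a string `s` with `Σ_{i=1}^{⌈n/2⌉} w_i(s) ≡ 0 (mod 3)`. -/
theorem exists_insertion_bits (n : ℕ) (hodd : Odd n) (h3 : 3 ∣ (n + 1) / 2)
    (x : List Bool) (hx : x.length = n - 2) :
    ∃ c₁ c₂ : Bool, c₁ ≤ c₂ ∧
      (∑ i ∈ Finset.Icc 1 ((n + 1) / 2),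
        cumW i (x.take 1 ++ [c₁] ++ (x.drop 1).take (n - 4) ++ [c₂] ++
          x.drop (n - 3))) % 3 = 0 := by
  obtain ⟨k, rfl⟩ := hodd
  set m := (2 * k + 1 + 1) / 2
  have hm : 3 ≤ m := by omega
  have hA : (x.take 1).length = 1 := by simp; omega
  have hC : ((x.drop 1).take (2 * k + 1 - 4)).length = 2 * m - 5 := by simp; omega
  have hD : (x.drop (2 * k + 1 - 3)).length = 1 := by simp; omega
  set t := ∑ l ∈ Icc 1 m,
    cumW l (x.take 1 ++ [false] ++ (x.drop 1).take (2 * k + 1 - 4) ++ [false] ++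
      x.drop (2 * k + 1 - 3))
  have hvalue : ∀ c₁ c₂ : Bool,
      ∑ l ∈ Icc 1 m, cumW l (x.take 1 ++ [c₁] ++ (x.drop 1).take (2 * k + 1 - 4) ++ [c₂] ++
        x.drop (2 * k + 1 - 3)) = t + (c₁.toNat + c₂.toNat) * (2 * m - 1) := by
    intro c₁ c₂
    rw [sum_cumW_insert_two, hA, hC, hD,
      sum_numWindowsCovering_of_edge (by omega) (by omega) (by omega),
      sum_numWindowsCovering_of_edge (by omega) (by omega) (by omega)]
    ring
  simp_rw [hvalue]
  obtain h | h | h : t % 3 = 0 ∨ t % 3 = 1 ∨ t % 3 = 2 := by omega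
  · exact ⟨false, false, le_rfl, by simp; omega⟩
  · exact ⟨false, true, Bool.false_le _, by simp; omega⟩
  · exact ⟨true, true, le_rfl, by simp; omega⟩
end
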